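/- arXiv:1104.3731 — 9 statements merged into one kernel-verified Lean document; each statement's English description precedes it below -/
import Mathlib

section
/- Fix an integer d ≥ 1. The growth constant μ(g) = lim_{n→∞} c_n^{DJ}(g)^{1/n} of the Domb–Joyce model converges, as g → ∞, to the connective constant μ = lim_{n→∞} c_n^{1/n} of the self-avoiding walk: lim_{g→∞} μ(g) = μ. -/
/-!
Formalization of statements from "The strong interaction limit of
continuous-time weakly self-avoiding walk" by Brydges, Dahlqvist, Slade.

An `n`-step nearest-neighbour walk on `ℤ^d` starting at the origin is encoded
bijectively by its sequence of steps `s : Fin n → Fin d × Bool`, a step being a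
coordinate direction together with a sign.
-/

open scoped BigOperators Topology
open Filter

namespace StrongInteraction

/-- The unit step in coordinate direction `e.1`, with sign `e.2`. -/
def stepVec (d : ℕ) (e : Fin d × Bool) : Fin d → ℤ :=
  fun i => if i = e.1 then (if e.2 then 1 else -1) else 0

/-- `walkPos s k` is the position `Y_k` of the walk started at the origin whose
successive nearest-neighbour steps are given by `s`. -/
def walkPos {d n : ℕ} (s : Fin n → Fin d × Bool) (k : Fin (n + 1)) : Fin d → ℤ :=
  ∑ i ∈ Finset.univ.filter (fun i : Fin n => (i : ℕ) < (k : ℕ)), stepVec d (s i)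

/-- `n_x(Y)`: the number of visits to `x` by the walk. -/
def visits {d n : ℕ} (s : Fin n → Fin d × Bool) (x : Fin d → ℤ) : ℕ :=
  (Finset.univ.filter (fun k : Fin (n + 1) => walkPos s k = x)).card

/-- The set of distinct vertices visited by the walk. -/
def walkRange {d n : ℕ} (s : Fin n → Fin d × Bool) : Finset (Fin d → ℤ) :=
  Finset.image (walkPos s) Finset.univ

/-- A walk is self-avoiding when its positions are pairwise distinct. -/
def SelfAvoiding {d n : ℕ} (s : Fin n → Fin d × Bool) : Prop :=
  Function.Injective (walkPos s)

instance {d n : ℕ} (s : Fin n → Fin d × Bool) : Decidable (SelfAvoiding s) :=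
  inferInstanceAs (Decidable (Function.Injective (walkPos s)))

/-- `c_n`: the number of `n`-step self-avoiding walks. -/
def csaw (d n : ℕ) : ℕ :=
  (Finset.univ.filter fun s : Fin n → Fin d × Bool => SelfAvoiding s).card


/-- The Domb–Joyce weight `exp(-g Σ_{x∈ℤ^d} n_x(Y)(n_x(Y)-1))` of a walk.
(The sum over `x ∈ ℤ^d` reduces to the sum over the range of the walk, since
`n_x = 0` elsewhere.) -/
noncomputable def djWeight {d n : ℕ} (g : ℝ) (s : Fin n → Fin d × Bool) : ℝ :=
  Real.exp (-g * ∑ x ∈ walkRange s, (visits s x : ℝ) * ((visits s x : ℝ) - 1))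

/-- `c_n^{DJ}(g) = Σ_{Y ∈ W_n} exp(-g Σ_x n_x(Y)(n_x(Y)-1))`. -/
noncomputable def cDJ (d n : ℕ) (g : ℝ) : ℝ :=
  ∑ s : Fin n → Fin d × Bool, djWeight g s

/-!
The interaction `Σ_x n_x(n_x - 1)` counts the ordered pairs of distinct times at which the walk
occupies the same site. A concatenation of two walks keeps the self-intersections of both
pieces, so the Domb–Joyce weight, and with it `c_n^{DJ}(g)`, is submultiplicative for `g ≥ 0`;
hence `μ(g) ≤ c_n^{DJ}(g)^{1/n}` for every `n ≥ 1`. For fixed `n`, `c_n^{DJ}(g) → c_n` as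
`g → ∞`, since every weight tends to the indicator of self-avoidance, while
`c_n ≤ c_n^{DJ}(g)` gives `μ ≤ μ(g)`.
-/

theorem tendsto_of_le_of_eventually_le_family {ι κ α : Type*} [TopologicalSpace α]
    [LinearOrder α] [OrderTopology α] {l : Filter ι} {p : Filter κ} [p.NeBot]
    {f : ι → α} {b : κ → ι → α} {c : κ → α} {L : α}
    (hc : Tendsto c p (𝓝 L)) (hb : ∀ n, Tendsto (b n) l (𝓝 (c n)))
    (hlow : ∀ᶠ x in l, L ≤ f x) (hupp : ∀ᶠ n in p, ∀ᶠ x in l, f x ≤ b n x) :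
    Tendsto f l (𝓝 L) := by
  refine tendsto_order.2 ⟨fun a ha => hlow.mono fun x hx => ha.trans_le hx, fun a ha => ?_⟩
  obtain ⟨n, hn, hcn⟩ := (hupp.and (hc.eventually (gt_mem_nhds ha))).exists
  exact (hn.and ((hb n).eventually (gt_mem_nhds hcn))).mono fun x hx => hx.1.trans_lt hx.2

theorem le_rpow_inv_of_submultiplicative {a : ℕ → ℝ} (ha : ∀ n, 0 ≤ a n)
    (hmul : ∀ m n, a (m + n) ≤ a m * a n) {L : ℝ}
    (hL : Tendsto (fun n : ℕ => a n ^ (n : ℝ)⁻¹) atTop (𝓝 L)) {n : ℕ} (hn : n ≠ 0) :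
    L ≤ a n ^ (n : ℝ)⁻¹ := by
  have hpow : ∀ k : ℕ, a (n * (k + 1)) ≤ a n ^ (k + 1) := by
    intro k
    induction k with
    | zero => simp
    | succ k ih =>
      calc a (n * (k + 1 + 1)) = a (n * (k + 1) + n) := by ring_nf
        _ ≤ a (n * (k + 1)) * a n := hmul _ _
        _ ≤ a n ^ (k + 1) * a n := mul_le_mul_of_nonneg_right ih (ha n)
        _ = a n ^ (k + 1 + 1) := (pow_succ _ _).symm
  have hsub : Tendsto (fun k : ℕ => n * (k + 1)) atTop atTop :=
    tendsto_atTop_mono (fun k => Nat.le_mul_of_pos_left _ (Nat.pos_of_ne_zero hn))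
      (tendsto_add_atTop_nat 1)
  refine le_of_tendsto' (hL.comp hsub) fun k => ?_
  calc a (n * (k + 1)) ^ ((n * (k + 1) : ℕ) : ℝ)⁻¹
      ≤ (a n ^ (k + 1)) ^ ((n * (k + 1) : ℕ) : ℝ)⁻¹ :=
        Real.rpow_le_rpow (ha _) (hpow k) (by positivity)
    _ = ((a n ^ (k + 1)) ^ ((k + 1 : ℕ) : ℝ)⁻¹) ^ (n : ℝ)⁻¹ := by
        rw [← Real.rpow_mul (pow_nonneg (ha n) _)]
        push_cast
        rw [mul_inv, mul_comm]
    _ = a n ^ (n : ℝ)⁻¹ := by rw [Real.pow_rpow_inv_natCast (ha n) k.succ_ne_zero]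

section Walk

variable {d n m : ℕ}

def selfIntersections (s : Fin n → Fin d × Bool) : Finset (Fin (n + 1) × Fin (n + 1)) :=
  Finset.univ.filter fun p => p.1 ≠ p.2 ∧ walkPos s p.1 = walkPos s p.2

theorem sum_visits_mul_visits_sub_one (s : Fin n → Fin d × Bool) :
    ∑ x ∈ walkRange s, (visits s x : ℝ) * ((visits s x : ℝ) - 1)
      = (selfIntersections s).card := by
  rw [Finset.card_eq_sum_card_fiberwise (f := fun p => walkPos s p.1) (t := walkRange s)
    (fun p _ => Finset.mem_image_of_mem _ (Finset.mem_univ _))]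
  push_cast
  refine Finset.sum_congr rfl fun x _ => ?_
  have hfiber : (selfIntersections s).filter (fun p => walkPos s p.1 = x)
      = (Finset.univ.filter fun k => walkPos s k = x).offDiag := by
    ext p
    simp only [selfIntersections, Finset.mem_filter, Finset.mem_offDiag, Finset.mem_univ,
      true_and]
    constructor
    · rintro ⟨⟨hne, heq⟩, rfl⟩
      exact ⟨rfl, heq.symm, hne⟩
    · rintro ⟨h1, h2, hne⟩
      exact ⟨⟨hne, h1.trans h2.symm⟩, h1⟩
  rw [hfiber, Finset.offDiag_card, ← visits, Nat.cast_sub (Nat.le_mul_self _)]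
  push_cast
  ring

theorem djWeight_eq (g : ℝ) (s : Fin n → Fin d × Bool) :
    djWeight g s = Real.exp (-g * (selfIntersections s).card) := by
  rw [djWeight, sum_visits_mul_visits_sub_one]

theorem selfIntersections_eq_empty_iff {s : Fin n → Fin d × Bool} :
    selfIntersections s = ∅ ↔ SelfAvoiding s := by
  simp only [selfIntersections, Finset.filter_eq_empty_iff, Finset.mem_univ, true_implies,
    SelfAvoiding, Function.Injective, Prod.forall]
  exact forall₂_congr fun i j => by tauto

theorem walkPos_zero (s : Fin n → Fin d × Bool) : walkPos s 0 = 0 := by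
  simp [walkPos]

theorem walkPos_append (s : Fin n → Fin d × Bool) (t : Fin m → Fin d × Bool)
    (k : Fin (n + m + 1)) :
    walkPos (Fin.append s t) k = walkPos s ⟨min k n, by omega⟩ + walkPos t ⟨k - n, by omega⟩ := by
  simp only [walkPos, Finset.sum_filter, Fin.sum_univ_add, Fin.append_left, Fin.append_right]
  congr 1 <;> refine Finset.sum_congr rfl fun i _ => ?_ <;>
    simp only [Fin.val_castAdd, Fin.val_natAdd] <;> split_ifs <;> first | rfl | omega

theorem walkPos_append_castLE (s : Fin n → Fin d × Bool) (t : Fin m → Fin d × Bool)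
    (i : Fin (n + 1)) :
    walkPos (Fin.append s t) (Fin.castLE (by omega) i) = walkPos s i := by
  rw [walkPos_append]
  simp only [Fin.val_castLE, min_eq_left (Nat.lt_succ_iff.mp i.isLt),
    Nat.sub_eq_zero_of_le (Nat.lt_succ_iff.mp i.isLt)]
  exact add_eq_left.mpr (walkPos_zero t)

theorem walkPos_append_natAdd (s : Fin n → Fin d × Bool) (t : Fin m → Fin d × Bool)
    (j : Fin (m + 1)) :
    walkPos (Fin.append s t) (Fin.natAdd n j) = walkPos s (Fin.last n) + walkPos t j := by
  rw [walkPos_append]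
  simp only [Fin.val_natAdd, min_eq_right (Nat.le_add_right n j), Nat.add_sub_cancel_left]
  rfl

theorem card_selfIntersections_add_le_append (s : Fin n → Fin d × Bool)
    (t : Fin m → Fin d × Bool) :
    (selfIntersections s).card + (selfIntersections t).card
      ≤ (selfIntersections (Fin.append s t)).card := by
  set left := (Fin.castLEEmb (by omega : n + 1 ≤ n + m + 1)).prodMap
    (Fin.castLEEmb (by omega : n + 1 ≤ n + m + 1))
  set right := (Fin.natAddEmb n : Fin (m + 1) ↪ Fin (n + m + 1)).prodMap (Fin.natAddEmb n)
  -- a pair in both images would have both of its times equal to `n`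
  have hdisj : Disjoint ((selfIntersections s).map left) ((selfIntersections t).map right) := by
    simp only [Finset.disjoint_left, Finset.mem_map, selfIntersections, Finset.mem_filter,
      Finset.mem_univ, true_and]
    rintro _ ⟨⟨i, j⟩, ⟨hij, -⟩, rfl⟩ ⟨⟨i', j'⟩, ⟨hij', -⟩, h⟩
    simp only [left, right, Function.Embedding.coe_prodMap, Prod.map, Prod.mk.injEq, Fin.ext_iff,
      Fin.natAddEmb_apply, Fin.castLEEmb_apply, Fin.val_natAdd, Fin.val_castLE] at h hij hij'
    omega
  have hsub : (selfIntersections s).map left ∪ (selfIntersections t).map right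
      ⊆ selfIntersections (Fin.append s t) := by
    intro _ hp
    simp only [Finset.mem_union, Finset.mem_map, selfIntersections, Finset.mem_filter,
      Finset.mem_univ, true_and] at hp ⊢
    rcases hp with ⟨⟨i, j⟩, ⟨hij, hY⟩, rfl⟩ | ⟨⟨i, j⟩, ⟨hij, hY⟩, rfl⟩
    · refine ⟨fun h => hij (Fin.castLE_injective (by omega) h), ?_⟩
      simp only [left, Function.Embedding.coe_prodMap, Prod.map, Fin.castLEEmb_apply,
        walkPos_append_castLE, hY]
    · refine ⟨fun h => hij (Fin.natAdd_injective _ _ h), ?_⟩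
      simp only [right, Function.Embedding.coe_prodMap, Prod.map, Fin.natAddEmb_apply,
        walkPos_append_natAdd, hY]
  calc (selfIntersections s).card + (selfIntersections t).card
      = ((selfIntersections s).map left ∪ (selfIntersections t).map right).card := by
        rw [Finset.card_union_of_disjoint hdisj, Finset.card_map, Finset.card_map]
    _ ≤ _ := Finset.card_le_card hsub

theorem djWeight_append_le {g : ℝ} (hg : 0 ≤ g) (s : Fin n → Fin d × Bool)
    (t : Fin m → Fin d × Bool) :
    djWeight g (Fin.append s t) ≤ djWeight g s * djWeight g t := by
  rw [djWeight_eq, djWeight_eq, djWeight_eq, ← Real.exp_add, Real.exp_le_exp, ← mul_add,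
    neg_mul, neg_mul, neg_le_neg_iff]
  exact mul_le_mul_of_nonneg_left (mod_cast card_selfIntersections_add_le_append s t) hg

theorem djWeight_of_selfAvoiding (g : ℝ) {s : Fin n → Fin d × Bool} (hs : SelfAvoiding s) :
    djWeight g s = 1 := by
  rw [djWeight_eq, selfIntersections_eq_empty_iff.mpr hs]
  simp

theorem tendsto_djWeight_atTop (s : Fin n → Fin d × Bool) :
    Tendsto (fun g => djWeight g s) atTop (𝓝 (if SelfAvoiding s then 1 else 0)) := by
  split_ifs with hs
  · simp only [djWeight_of_selfAvoiding _ hs, tendsto_const_nhds]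
  · have hpos : (0 : ℝ) < (selfIntersections s).card := by
      exact_mod_cast Finset.card_pos.mpr
        (Finset.nonempty_iff_ne_empty.mpr (mt selfIntersections_eq_empty_iff.mp hs))
    simp only [djWeight_eq, neg_mul]
    exact Real.tendsto_exp_neg_atTop_nhds_zero.comp (tendsto_id.atTop_mul_const hpos)

end Walk

theorem cDJ_nonneg (d n : ℕ) (g : ℝ) : 0 ≤ cDJ d n g :=
  Finset.sum_nonneg fun _ _ => (Real.exp_pos _).le

theorem cDJ_add_le {g : ℝ} (hg : 0 ≤ g) (d n m : ℕ) :
    cDJ d (n + m) g ≤ cDJ d n g * cDJ d m g := by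
  rw [cDJ, ← Equiv.sum_comp (Fin.appendEquiv n m), cDJ, cDJ, Finset.sum_mul_sum,
    ← Finset.sum_product', Finset.univ_product_univ]
  exact Finset.sum_le_sum fun p _ => djWeight_append_le hg p.1 p.2

theorem csaw_le_cDJ (d n : ℕ) (g : ℝ) : (csaw d n : ℝ) ≤ cDJ d n g := by
  rw [csaw, Finset.card_filter, cDJ]
  push_cast
  refine Finset.sum_le_sum fun s _ => ?_
  split_ifs with hs
  · exact (djWeight_of_selfAvoiding g hs).ge
  · exact (Real.exp_pos _).le

theorem tendsto_cDJ_atTop (d n : ℕ) : Tendsto (cDJ d n) atTop (𝓝 (csaw d n)) := by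
  rw [csaw, Finset.card_filter]
  push_cast
  exact tendsto_finsetSum _ fun s _ => tendsto_djWeight_atTop s

theorem growth_constant_tendsto_connective_constant_general (d : ℕ)
    (mu : ℝ → ℝ) (muSAW : ℝ)
    (hmu : ∀ g : ℝ, 0 < g →
      Tendsto (fun n : ℕ => (cDJ d n g) ^ ((n : ℝ)⁻¹)) atTop (𝓝 (mu g)))
    (hmuSAW : Tendsto (fun n : ℕ => ((csaw d n : ℝ)) ^ ((n : ℝ)⁻¹)) atTop (𝓝 muSAW)) :
    Tendsto mu atTop (𝓝 muSAW) := by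
  have hlim (n : ℕ) : Tendsto (fun g => cDJ d n g ^ (n : ℝ)⁻¹) atTop
      (𝓝 ((csaw d n : ℝ) ^ (n : ℝ)⁻¹)) :=
    (tendsto_cDJ_atTop d n).rpow_const (Or.inr (by positivity))
  refine tendsto_of_le_of_eventually_le_family hmuSAW hlim ?_ ?_
  · filter_upwards [eventually_gt_atTop 0] with g hg
    exact le_of_tendsto_of_tendsto' hmuSAW (hmu g hg) fun n =>
      Real.rpow_le_rpow (Nat.cast_nonneg _) (csaw_le_cDJ d n g) (by positivity)
  · filter_upwards [eventually_ne_atTop 0] with n hn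
    filter_upwards [eventually_gt_atTop 0] with g hg
    exact le_rpow_inv_of_submultiplicative (fun n => cDJ_nonneg d n g)
      (fun m n => cDJ_add_le hg.le d m n) (hmu g hg) hn

/-- the growth constant `μ(g)` of the Domb–Joyce model converges,
as `g → ∞`, to the connective constant `μ` of the self-avoiding walk. -/
theorem growth_constant_tendsto_connective_constant (d : ℕ) (hd : 1 ≤ d)
    (mu : ℝ → ℝ) (muSAW : ℝ)
    (hmu : ∀ g : ℝ, 0 < g →
      Tendsto (fun n : ℕ => (cDJ d n g) ^ ((n : ℝ)⁻¹)) atTop (𝓝 (mu g)))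
    (hmuSAW : Tendsto (fun n : ℕ => ((csaw d n : ℝ)) ^ ((n : ℝ)⁻¹)) atTop (𝓝 muSAW)) :
    Tendsto mu atTop (𝓝 muSAW) :=
  growth_constant_tendsto_connective_constant_general d mu muSAW hmu hmuSAW

end StrongInteraction
end

section
/- Fix integers d ≥ 1 and n ≥ 1. For g > 0 and ρ ∈ ℝ define the quick step weight of Y ∈ W_n as Q_{g,ρ,n}(Y) = (∏_{x∈range(Y)} F_{g,ρ}(n_x(Y))) / (Σ_{Y'∈W_n} ∏_{x∈range(Y')} F_{g,ρ}(n_x(Y'))). Suppose ρ = ρ(g) is chosen so that α(g,ρ(g)) = (ρ(g)−1)/(2√g) converges to a finite limit a ∈ ℝ as g → ∞. Then for every Y ∈ W_n, lim_{g→∞} Q_{g,ρ(g),n}(Y) = (∏_{x∈range(Y)} e^{a²} I_{n_x(Y)}(a)) / (Σ_{Y'∈W_n} ∏_{x∈range(Y')} e^{a²} I_{n_x(Y')}(a)). -/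
/-!
Formalization of statements from "The strong interaction limit of
continuous-time weakly self-avoiding walk" by Brydges, Dahlqvist, Slade.

An `n`-step nearest-neighbour walk on `ℤ^d` starting at the origin is encoded
bijectively by its sequence of steps `s : Fin n → Fin d × Bool`, a step being a
coordinate direction together with a sign.
-/

open scoped BigOperators Topology
open Filter

namespace StrongInteraction

/-- `F_{g,ρ}(m) = ∫_0^∞ (s^{m-1}/(m-1)!) e^{-s - g s² + ρ s} ds`, the contribution
of a vertex visited `m` times, obtained from the Gamma(m,1) density of the sum of
`m` independent Exp(1) holding times. -/
noncomputable def F (g ρ : ℝ) (m : ℕ) : ℝ :=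
  ∫ t in Set.Ioi (0 : ℝ),
    (t ^ (m - 1) / (Nat.factorial (m - 1))) * Real.exp (-t - g * t ^ 2 + ρ * t)

/-- The quick-step probability weight `Q_{g,ρ,n}(Y)` of a walk. -/
noncomputable def Qweight (d n : ℕ) (g ρ : ℝ) (s : Fin n → Fin d × Bool) : ℝ :=
  (∏ x ∈ walkRange s, F g ρ (visits s x)) /
    ∑ s' : Fin n → Fin d × Bool, ∏ x ∈ walkRange s', F g ρ (visits s' x)

/-- `I_m(a) = ∫_{-a}^∞ ((a+u)^{m-1}/(m-1)!) e^{-u²} du`. -/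
noncomputable def Ifun (a : ℝ) (m : ℕ) : ℝ :=
  ∫ u in Set.Ioi (-a), ((a + u) ^ (m - 1) / (Nat.factorial (m - 1))) * Real.exp (-u ^ 2)

/-!
With `b = √g` and `α = (ρ - 1) / (2b)`, completing the square in the exponent and substituting
`x = bt` give `b ^ m * F_{g,ρ}(m) = e^{α²} I_m(α)`. The visit counts of a walk add up to `n + 1`,
so every walk's weight picks up the same factor `b ^ (n + 1)`, which cancels in `Q`. Hence
`Q_{g,ρ,n}(Y)` is a fixed function of `α`, continuous because each `I_m` is (dominated
convergence) and the denominator is positive.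
-/

open MeasureTheory Set

lemma integral_Ioi_comp_add_right {E : Type*} [NormedAddCommGroup E] [NormedSpace ℝ E]
    (f : ℝ → E) (c d : ℝ) : ∫ x in Ioi c, f (x + d) = ∫ x in Ioi (c + d), f x := by
  have h := (measurePreserving_add_right volume d).setIntegral_preimage_emb
    (measurableEmbedding_addRight d) f (Ioi (c + d))
  rwa [preimage_add_const_Ioi, add_sub_cancel_right] at h

lemma Ifun_eq_integral_Ioi_zero (a : ℝ) (m : ℕ) :
    Ifun a m = ∫ t in Ioi 0, t ^ (m - 1) / (m - 1).factorial * Real.exp (-(t - a) ^ 2) := by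
  rw [Ifun, ← neg_add_cancel a, ← integral_Ioi_comp_add_right]
  refine setIntegral_congr_fun measurableSet_Ioi fun t _ => ?_
  ring_nf

lemma integrable_exp_add_sub_sq_div_two (c a : ℝ) :
    Integrable fun t : ℝ => Real.exp (c + t - (t - a) ^ 2 / 2) := by
  have hgauss := (integrable_exp_neg_mul_sq (b := 1 / 2) (by norm_num)).comp_sub_right (1 + a)
  refine (hgauss.const_mul (Real.exp (c + a + 1 / 2))).congr (Eventually.of_forall fun t => ?_)
  simp only [← Real.exp_add]
  ring_nf

lemma pow_div_factorial_mul_exp_le {t y a : ℝ} (ht : 0 < t) (hy : |y - a| ≤ 1) (k : ℕ) :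
    t ^ k / k.factorial * Real.exp (-(t - y) ^ 2) ≤ Real.exp (1 + t - (t - a) ^ 2 / 2) := by
  have hya : (y - a) ^ 2 ≤ 1 := by nlinarith [abs_le.mp hy]
  calc t ^ k / k.factorial * Real.exp (-(t - y) ^ 2)
      ≤ Real.exp t * Real.exp (1 - (t - a) ^ 2 / 2) := by
        gcongr
        · exact Real.pow_div_factorial_le_exp t ht.le k
        · nlinarith [sq_nonneg (t - y - (y - a))]
    _ = Real.exp (1 + t - (t - a) ^ 2 / 2) := by rw [← Real.exp_add]; ring_nf

lemma integrableOn_pow_div_factorial_mul_exp (a : ℝ) (k : ℕ) :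
    IntegrableOn (fun t : ℝ => t ^ k / k.factorial * Real.exp (-(t - a) ^ 2)) (Ioi 0) := by
  refine (integrable_exp_add_sub_sq_div_two 1 a).integrableOn.mono'
    (by fun_prop : Continuous _).aestronglyMeasurable.restrict ?_
  filter_upwards [ae_restrict_mem measurableSet_Ioi] with t (ht : 0 < t)
  rw [Real.norm_of_nonneg (by positivity)]
  exact pow_div_factorial_mul_exp_le ht (by simp) k

lemma Ifun_pos (a : ℝ) (m : ℕ) : 0 < Ifun a m := by
  rw [Ifun_eq_integral_Ioi_zero, setIntegral_pos_iff_support_of_nonneg_ae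
    (ae_restrict_of_forall_mem measurableSet_Ioi fun t (ht : 0 < t) => by positivity)
    (integrableOn_pow_div_factorial_mul_exp a _)]
  have hsupp : Ioi (0 : ℝ) ⊆ Function.support
      (fun t : ℝ => t ^ (m - 1) / (m - 1).factorial * Real.exp (-(t - a) ^ 2)) ∩ Ioi 0 :=
    fun t (ht : 0 < t) => ⟨(by positivity : (0 : ℝ) < _).ne', ht⟩
  exact (by simp : (0 : ENNReal) < volume (Ioi (0 : ℝ))).trans_le (measure_mono hsupp)

lemma continuous_Ifun (m : ℕ) : Continuous fun a => Ifun a m := by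
  simp only [Ifun_eq_integral_Ioi_zero]
  refine continuous_iff_continuousAt.2 fun a => continuousAt_of_dominated
    (Eventually.of_forall fun y => (by fun_prop : Continuous _).aestronglyMeasurable)
    ?_ (integrable_exp_add_sub_sq_div_two 1 a).integrableOn
    (Eventually.of_forall fun t => by fun_prop)
  filter_upwards [Metric.closedBall_mem_nhds a one_pos] with y hy
  filter_upwards [ae_restrict_mem measurableSet_Ioi] with t (ht : 0 < t)
  rw [Real.norm_of_nonneg (by positivity)]
  exact pow_div_factorial_mul_exp_le ht (by simpa [Real.dist_eq] using hy) _

lemma pow_mul_F_sq {b : ℝ} (hb : 0 < b) (α : ℝ) {m : ℕ} (hm : 1 ≤ m) :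
    b ^ m * F (b ^ 2) (1 + 2 * b * α) m = Real.exp (α ^ 2) * Ifun α m := by
  obtain ⟨k, rfl⟩ : ∃ k, m = k + 1 := ⟨m - 1, by omega⟩
  have hscale := integral_comp_mul_left_Ioi'
    (fun x => x ^ k / k.factorial * Real.exp (-(x - α) ^ 2)) 0 hb
  rw [mul_zero, smul_eq_mul] at hscale
  simp only [F, Ifun_eq_integral_Ioi_zero, add_tsub_cancel_right, ← hscale,
    ← integral_const_mul]
  refine setIntegral_congr_fun measurableSet_Ioi fun t _ => ?_
  rw [show -t - b ^ 2 * t ^ 2 + (1 + 2 * b * α) * t = α ^ 2 + -(b * t - α) ^ 2 by ring,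
    Real.exp_add]
  ring

section Walks

variable {d n : ℕ} (s : Fin n → Fin d × Bool)

lemma one_le_visits_of_mem_walkRange {x : Fin d → ℤ} (hx : x ∈ walkRange s) :
    1 ≤ visits s x := by
  obtain ⟨k, -, rfl⟩ := Finset.mem_image.mp hx
  exact Finset.card_pos.mpr ⟨k, by simp⟩

lemma sum_visits_walkRange : ∑ x ∈ walkRange s, visits s x = n + 1 := by
  simp only [walkRange, visits]
  rw [← Finset.card_eq_sum_card_image]
  simp

lemma prod_walkRange_pow_visits_mul (c : ℝ) (f : ℕ → ℝ) :
    ∏ x ∈ walkRange s, c ^ visits s x * f (visits s x) =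
      c ^ (n + 1) * ∏ x ∈ walkRange s, f (visits s x) := by
  rw [Finset.prod_mul_distrib, Finset.prod_pow_eq_pow_sum, sum_visits_walkRange]

lemma Qweight_eq_of_pos {g : ℝ} (hg : 0 < g) (ρ : ℝ) :
    let α := (ρ - 1) / (2 * √g)
    Qweight d n g ρ s = (∏ x ∈ walkRange s, Real.exp (α ^ 2) * Ifun α (visits s x)) /
      ∑ s' : Fin n → Fin d × Bool,
        ∏ x ∈ walkRange s', Real.exp (α ^ 2) * Ifun α (visits s' x) := by
  intro α
  have hb : 0 < √g := Real.sqrt_pos.2 hg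
  have hρ : 1 + 2 * √g * α = ρ := by simp only [α]; field_simp; ring
  have hprod : ∀ s' : Fin n → Fin d × Bool,
      ∏ x ∈ walkRange s', Real.exp (α ^ 2) * Ifun α (visits s' x) =
        √g ^ (n + 1) * ∏ x ∈ walkRange s', F g ρ (visits s' x) := fun s' => by
    rw [← prod_walkRange_pow_visits_mul]
    refine Finset.prod_congr rfl fun x hx => ?_
    rw [← pow_mul_F_sq hb α (one_le_visits_of_mem_walkRange s' hx), Real.sq_sqrt hg.le, hρ]
  simp only [hprod, ← Finset.mul_sum, mul_div_mul_left _ _ (pow_ne_zero _ hb.ne'), Qweight]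

end Walks

theorem quickstep_limit_finite_a_general (d n : ℕ) (hd : 1 ≤ d)
    (ρ : ℝ → ℝ) (a : ℝ)
    (hα : Tendsto (fun g : ℝ => (ρ g - 1) / (2 * Real.sqrt g)) atTop (𝓝 a))
    (s : Fin n → Fin d × Bool) :
    Tendsto (fun g : ℝ => Qweight d n g (ρ g) s) atTop
      (𝓝 ((∏ x ∈ walkRange s, Real.exp (a ^ 2) * Ifun a (visits s x)) /
        ∑ s' : Fin n → Fin d × Bool,
          ∏ x ∈ walkRange s', Real.exp (a ^ 2) * Ifun a (visits s' x))) := by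
  have : NeZero d := ⟨by omega⟩
  set W : ℝ → (Fin n → Fin d × Bool) → ℝ :=
    fun α s' => ∏ x ∈ walkRange s', Real.exp (α ^ 2) * Ifun α (visits s' x)
  have hW : ∀ s', Continuous fun α => W α s' := fun s' =>
    continuous_finsetProd _ fun x _ => (continuous_pow 2).rexp.mul (continuous_Ifun _)
  have hden : ∑ s', W a s' ≠ 0 := (Finset.sum_pos (fun s' _ => Finset.prod_pos fun x _ =>
    mul_pos (Real.exp_pos _) (Ifun_pos a _)) Finset.univ_nonempty).ne'
  have hratio : ContinuousAt (fun α => W α s / ∑ s', W α s') a :=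
    (hW s).continuousAt.div (continuous_finsetSum _ fun s' _ => hW s').continuousAt hden
  refine (hratio.tendsto.comp hα).congr' ?_
  filter_upwards [eventually_gt_atTop 0] with g hg
  exact (Qweight_eq_of_pos s hg (ρ g)).symm

/-- quick step model: if `α(g,ρ(g)) = (ρ(g)-1)/(2√g) → a ∈ ℝ` as
`g → ∞`, the quick-step weights converge to the limiting quick-step measure. -/
theorem quickstep_limit_finite_a (d n : ℕ) (hd : 1 ≤ d) (hn : 1 ≤ n)
    (ρ : ℝ → ℝ) (a : ℝ)
    (hα : Tendsto (fun g : ℝ => (ρ g - 1) / (2 * Real.sqrt g)) atTop (𝓝 a))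
    (s : Fin n → Fin d × Bool) :
    Tendsto (fun g : ℝ => Qweight d n g (ρ g) s) atTop
      (𝓝 ((∏ x ∈ walkRange s, Real.exp (a ^ 2) * Ifun a (visits s x)) /
        ∑ s' : Fin n → Fin d × Bool,
          ∏ x ∈ walkRange s', Real.exp (a ^ 2) * Ifun a (visits s' x))) :=
  quickstep_limit_finite_a_general d n hd ρ a hα s

end StrongInteraction
end

section
/- Fix integers d ≥ 1 and n ≥ 1. For g > 0 and ρ ∈ ℝ define the weight of Y ∈ W_n as Q_{g,ρ,n}(Y) = (∏_{x∈range(Y)} F_{g,ρ}(n_x(Y))) / (Σ_{Y'∈W_n} ∏_{x∈range(Y')} F_{g,ρ}(n_x(Y'))). Suppose ρ = ρ(g) is chosen so that α(g,ρ(g)) = (ρ(g)−1)/(2√g) → −∞ as g → ∞. Then for every Y ∈ W_n, lim_{g→∞} Q_{g,ρ(g),n}(Y) = (2d)^{−n}; i.e. the limit is the uniform measure on all n-step nearest-neighbour walks (simple random walk). -/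
/-!
Formalization of statements from "The strong interaction limit of
continuous-time weakly self-avoiding walk" by Brydges, Dahlqvist, Slade.

An `n`-step nearest-neighbour walk on `ℤ^d` starting at the origin is encoded
bijectively by its sequence of steps `s : Fin n → Fin d × Bool`, a step being a
coordinate direction together with a sign.
-/

open scoped BigOperators Topology
open Filter

namespace StrongInteraction

/-! The substitution `t ↦ (1 - ρ) t` gives `F g ρ m = (1 - ρ)⁻ᵐ F ε 0 m` with
`ε = g / (1 - ρ)² = 1 / (4 α²)`. Since the visit numbers of every `n`-step walk sum
to `n + 1`, the factors `(1 - ρ)⁻ᵐ` multiply to the same constant for all walks and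
cancel in `Q`, so `Q_{g,ρ} = Q_{ε,0}`. As `α → -∞`, `ε → 0`, and
`F 0 0 m = Γ(m)/(m-1)! = 1`; by dominated convergence the unnormalised weight of every
walk tends to `1`, so `Q` tends to the uniform measure. -/

open MeasureTheory Set

section Integrals

lemma F_zero_zero (m : ℕ) : F 0 0 m = 1 := by
  have hΓ := Real.Gamma_eq_integral (s := ((m - 1 : ℕ) : ℝ) + 1) (by positivity)
  rw [Real.Gamma_nat_eq_factorial, add_sub_cancel_right] at hΓ
  have hfac : ((m - 1).factorial : ℝ) ≠ 0 := by positivity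
  calc F 0 0 m
      = ((m - 1).factorial : ℝ)⁻¹ *
          ∫ t in Ioi (0 : ℝ), Real.exp (-t) * t ^ ((m - 1 : ℕ) : ℝ) := by
        rw [F, ← integral_const_mul]
        refine setIntegral_congr_fun measurableSet_Ioi fun t _ => ?_
        simp only [Real.rpow_natCast, zero_mul, sub_zero, add_zero]
        ring
    _ = 1 := by rw [← hΓ, inv_mul_cancel₀ hfac]

lemma tendsto_F_zero (m : ℕ) : Tendsto (fun ε => F ε 0 m) (𝓝[≥] 0) (𝓝 1) := by
  set f : ℝ → ℝ → ℝ := fun ε t =>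
    t ^ (m - 1) / (m - 1).factorial * Real.exp (-t - ε * t ^ 2 + 0 * t) with hf
  have hF : ∫ t in Ioi 0, f 0 t = 1 := F_zero_zero m
  have hbound : IntegrableOn (f 0) (Ioi 0) := Integrable.of_integral_ne_zero (hF ▸ one_ne_zero)
  rw [← F_zero_zero m]
  refine tendsto_integral_filter_of_dominated_convergence (f 0) ?_ ?_ hbound ?_
  · exact Eventually.of_forall fun ε => (Continuous.aestronglyMeasurable (by fun_prop)).restrict
  · filter_upwards [self_mem_nhdsWithin] with ε (hε : 0 ≤ ε)
    refine (ae_restrict_iff' measurableSet_Ioi).2 (Eventually.of_forall fun t (ht : 0 < t) => ?_)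
    simp only [hf, Real.norm_eq_abs]
    rw [abs_of_nonneg (by positivity)]
    gcongr
  · refine Eventually.of_forall fun t => ?_
    have : Continuous fun ε => f ε t := by fun_prop
    exact this.continuousWithinAt.tendsto

lemma pow_mul_F_eq (g ρ : ℝ) (k : ℕ) (hρ : ρ < 1) :
    (1 - ρ) ^ (k + 1) * F g ρ (k + 1) = F (g / (1 - ρ) ^ 2) 0 (k + 1) := by
  have hc : 0 < 1 - ρ := sub_pos.2 hρ
  have hsubst := integral_comp_mul_left_Ioi
    (fun u : ℝ => u ^ k / k.factorial * Real.exp (-u - g / (1 - ρ) ^ 2 * u ^ 2 + 0 * u)) 0 hc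
  rw [mul_zero, smul_eq_mul] at hsubst
  have hintegrand : ∀ t : ℝ,
      (1 - ρ) ^ k * (t ^ k / k.factorial * Real.exp (-t - g * t ^ 2 + ρ * t)) =
        ((1 - ρ) * t) ^ k / k.factorial *
          Real.exp (-((1 - ρ) * t) - g / (1 - ρ) ^ 2 * ((1 - ρ) * t) ^ 2 + 0 * ((1 - ρ) * t)) :=
      by
    intro t
    have hexp : -((1 - ρ) * t) - g / (1 - ρ) ^ 2 * ((1 - ρ) * t) ^ 2 + 0 * ((1 - ρ) * t) =
        -t - g * t ^ 2 + ρ * t := by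
      field_simp
      ring
    rw [hexp, mul_pow]
    ring
  simp only [F, Nat.add_sub_cancel, ← hintegrand, integral_const_mul] at hsubst ⊢
  rw [pow_succ', mul_assoc, hsubst, mul_inv_cancel_left₀ hc.ne']

end Integrals

section Walks

variable {d n : ℕ}

lemma sum_visits (s : Fin n → Fin d × Bool) : ∑ x ∈ walkRange s, visits s x = n + 1 := by
  classical
  simpa [walkRange, visits] using (Finset.card_eq_sum_card_image (walkPos s) Finset.univ).symm

lemma visits_pos (s : Fin n → Fin d × Bool) {x : Fin d → ℤ} (hx : x ∈ walkRange s) :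
    0 < visits s x := by
  obtain ⟨k, -, rfl⟩ := Finset.mem_image.1 hx
  exact Finset.card_pos.2 ⟨k, by simp⟩

lemma card_walks : Fintype.card (Fin n → Fin d × Bool) = (2 * d) ^ n := by
  rw [Fintype.card_fun, Fintype.card_prod, Fintype.card_fin, Fintype.card_fin, Fintype.card_bool,
    mul_comm]

lemma pow_mul_prod_F_eq (g ρ : ℝ) (hρ : ρ < 1) (s : Fin n → Fin d × Bool) :
    (1 - ρ) ^ (n + 1) * ∏ x ∈ walkRange s, F g ρ (visits s x) =
      ∏ x ∈ walkRange s, F (g / (1 - ρ) ^ 2) 0 (visits s x) := by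
  rw [← sum_visits s, ← Finset.prod_pow_eq_pow_sum, ← Finset.prod_mul_distrib]
  refine Finset.prod_congr rfl fun x hx => ?_
  obtain ⟨k, hk⟩ := Nat.exists_eq_add_one_of_ne_zero (visits_pos s hx).ne'
  rw [hk, pow_mul_F_eq g ρ k hρ]

lemma Qweight_eq_Qweight_zero (g ρ : ℝ) (hρ : ρ < 1) (s : Fin n → Fin d × Bool) :
    Qweight d n g ρ s = Qweight d n (g / (1 - ρ) ^ 2) 0 s := by
  have hc : (1 - ρ) ^ (n + 1) ≠ 0 := pow_ne_zero _ (sub_pos.2 hρ).ne'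
  simp only [Qweight, ← pow_mul_prod_F_eq g ρ hρ, ← Finset.mul_sum, mul_div_mul_left _ _ hc]

lemma tendsto_Qweight_zero (s : Fin n → Fin d × Bool) :
    Tendsto (fun ε => Qweight d n ε 0 s) (𝓝[≥] 0) (𝓝 ((2 * d : ℝ) ^ n)⁻¹) := by
  have hprod : ∀ s' : Fin n → Fin d × Bool,
      Tendsto (fun ε => ∏ x ∈ walkRange s', F ε 0 (visits s' x)) (𝓝[≥] 0) (𝓝 1) := by
    intro s'
    simpa using tendsto_finsetProd (walkRange s') fun x _ => tendsto_F_zero (visits s' x)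
  have hsum : Tendsto
      (fun ε => ∑ s' : Fin n → Fin d × Bool, ∏ x ∈ walkRange s', F ε 0 (visits s' x))
      (𝓝[≥] 0) (𝓝 ((2 * d : ℝ) ^ n)) := by
    have hcard : ∑ _s' : Fin n → Fin d × Bool, (1 : ℝ) = (2 * d : ℝ) ^ n := by
      rw [Finset.sum_const, Finset.card_univ, card_walks]
      simp
    simpa only [hcard] using tendsto_finsetSum Finset.univ fun s' _ => hprod s'
  have hne : ((2 * d : ℝ) ^ n) ≠ 0 := by
    have : 0 < Fintype.card (Fin n → Fin d × Bool) := Fintype.card_pos_iff.2 ⟨s⟩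
    rw [card_walks] at this
    exact_mod_cast this.ne'
  have hlim := (hprod s).div hsum hne
  rw [one_div] at hlim
  exact hlim

end Walks

lemma div_one_sub_sq_eq (g ρ : ℝ) (hg : 0 < g) :
    g / (1 - ρ) ^ 2 = ((2 * ((ρ - 1) / (2 * Real.sqrt g)))⁻¹) ^ 2 := by
  rw [mul_div_assoc', mul_div_mul_left _ _ two_ne_zero, inv_div, div_pow, Real.sq_sqrt hg.le,
    ← neg_sub, neg_sq]

lemma tendsto_div_one_sub_sq {ρ : ℝ → ℝ}
    (hα : Tendsto (fun g : ℝ => (ρ g - 1) / (2 * Real.sqrt g)) atTop atBot) :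
    Tendsto (fun g => g / (1 - ρ g) ^ 2) atTop (𝓝[≥] 0) := by
  have hsq :
      Tendsto (fun g => ((2 * ((ρ g - 1) / (2 * Real.sqrt g)))⁻¹) ^ 2) atTop (𝓝 0) := by
    have h := (tendsto_inv_atBot_zero.comp (hα.const_mul_atBot two_pos)).pow 2
    rwa [zero_pow two_ne_zero] at h
  refine tendsto_nhdsWithin_iff.2 ⟨hsq.congr' ?_, ?_⟩
  · filter_upwards [eventually_gt_atTop 0] with g hg
    exact (div_one_sub_sq_eq g (ρ g) hg).symm
  · filter_upwards [eventually_ge_atTop 0] with g hg using div_nonneg hg (sq_nonneg _)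

theorem quickstep_limit_a_bot_general (d n : ℕ)
    (ρ : ℝ → ℝ)
    (hα : Tendsto (fun g : ℝ => (ρ g - 1) / (2 * Real.sqrt g)) atTop atBot)
    (s : Fin n → Fin d × Bool) :
    Tendsto (fun g : ℝ => Qweight d n g (ρ g) s) atTop
      (𝓝 (((2 * d : ℝ)) ^ n)⁻¹) := by
  have hρ : ∀ᶠ g in atTop, ρ g < 1 := by
    filter_upwards [hα.eventually (eventually_lt_atBot 0)] with g hneg
    linarith [neg_of_div_neg_left hneg (by positivity)]
  refine ((tendsto_Qweight_zero s).comp (tendsto_div_one_sub_sq hα)).congr' ?_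
  filter_upwards [hρ] with g hg using (Qweight_eq_Qweight_zero g (ρ g) hg s).symm

/-- if `α(g,ρ(g)) = (ρ(g)-1)/(2√g) → -∞` as `g → ∞`, the
quick-step weights converge to the uniform measure on all `(2d)^n` walks. -/
theorem quickstep_limit_a_bot (d n : ℕ) (hd : 1 ≤ d) (hn : 1 ≤ n)
    (ρ : ℝ → ℝ)
    (hα : Tendsto (fun g : ℝ => (ρ g - 1) / (2 * Real.sqrt g)) atTop atBot)
    (s : Fin n → Fin d × Bool) :
    Tendsto (fun g : ℝ => Qweight d n g (ρ g) s) atTop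
      (𝓝 (((2 * d : ℝ)) ^ n)⁻¹) :=
  quickstep_limit_a_bot_general d n ρ hα s

end StrongInteraction
end

section
/- For every integer m ≥ 1, lim_{b→∞} (2b)^m e^{b²} I_m(−b) = 1; equivalently, e^{α²} I_m(α) ∼ (−2α)^{−m} as α → −∞. -/
/-!
Formalization of statements from "The strong interaction limit of
continuous-time weakly self-avoiding walk" by Brydges, Dahlqvist, Slade.

An `n`-step nearest-neighbour walk on `ℤ^d` starting at the origin is encoded
bijectively by its sequence of steps `s : Fin n → Fin d × Bool`, a step being a
coordinate direction together with a sign.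
-/

open scoped BigOperators Topology
open Filter

namespace StrongInteraction

/-!
After the substitution `u = b + s / (2b)`, the quantity `(2b)^m e^{b²} I_m(-b)` becomes
`∫_0^∞ e^{-s²/(4b²)} s^{m-1} e^{-s} / (m-1)! ds`. The Gaussian factor increases to `1` as
`b → ∞`, so by dominated convergence the limit is `Γ(m) / (m-1)! = 1`.
-/

open MeasureTheory Set Real Nat

theorem tendsto_integral_exp_neg_mul_sq_smul {E : Type*} [NormedAddCommGroup E]
    [NormedSpace ℝ E] {μ : Measure ℝ} {f : ℝ → E} (hf : Integrable f μ) :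
    Tendsto (fun ε : ℝ => ∫ x, exp (-(ε * x ^ 2)) • f x ∂μ) (𝓝[≥] 0) (𝓝 (∫ x, f x ∂μ)) := by
  have hcont (x : ℝ) : Continuous fun ε : ℝ => exp (-(ε * x ^ 2)) • f x := by fun_prop
  refine tendsto_integral_filter_of_dominated_convergence (fun x => ‖f x‖) ?_ ?_ hf.norm ?_
  · exact Eventually.of_forall fun ε =>
      (by fun_prop : Continuous fun x : ℝ => exp (-(ε * x ^ 2))).aestronglyMeasurable.smul
        hf.aestronglyMeasurable
  · filter_upwards [self_mem_nhdsWithin] with ε (hε : 0 ≤ ε)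
    refine ae_of_all _ fun x => ?_
    rw [norm_smul, Real.norm_of_nonneg (exp_pos _).le]
    exact mul_le_of_le_one_left (norm_nonneg _) (exp_le_one_iff.2 (neg_nonpos.2 (by positivity)))
  · refine ae_of_all _ fun x => ?_
    simpa using ((hcont x).tendsto 0).mono_left nhdsWithin_le_nhds

theorem setIntegral_Ioi_comp_add_right {E : Type*} [NormedAddCommGroup E] [NormedSpace ℝ E]
    (g : ℝ → E) (a c : ℝ) : ∫ x in Ioi a, g (x + c) = ∫ x in Ioi (a + c), g x := by
  rw [← integral_indicator measurableSet_Ioi, ← integral_indicator measurableSet_Ioi]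
  conv_rhs => rw [← integral_add_right_eq_self _ c]
  congr 1
  ext x
  have hpre : Ioi a = (fun x => x + c) ⁻¹' Ioi (a + c) := by simp
  rw [hpre]
  exact indicator_comp_right (fun x => x + c) (g := g)

theorem integrableOn_pow_mul_exp_neg_Ioi (n : ℕ) :
    IntegrableOn (fun x : ℝ => x ^ n * exp (-x)) (Ioi 0) := by
  simpa [mul_comm] using GammaIntegral_convergent (s := n + 1) (by positivity)

theorem integral_pow_mul_exp_neg_Ioi (n : ℕ) :
    ∫ x in Ioi (0 : ℝ), x ^ n * exp (-x) = n ! := by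
  simpa [mul_comm] using (Gamma_eq_integral (s := n + 1) (by positivity)).symm.trans
    (Gamma_nat_eq_factorial n)

theorem Ifun_neg_succ_eq_integral (n : ℕ) (b : ℝ) :
    Ifun (-b) (n + 1) = ∫ t in Ioi 0, t ^ n / n ! * exp (-(t + b) ^ 2) := by
  simpa [Ifun] using
    (setIntegral_Ioi_comp_add_right (fun u => (-b + u) ^ n / n ! * exp (-u ^ 2)) 0 b).symm

theorem Ifun_neg_succ_eq_integral_damped (n : ℕ) {b : ℝ} (hb : 0 < b) :
    (2 * b) ^ (n + 1) * exp (b ^ 2) * Ifun (-b) (n + 1)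
      = ∫ s in Ioi 0, exp (-((4 * b ^ 2)⁻¹ * s ^ 2)) • (s ^ n * exp (-s) / n !) := by
  have hc : 0 < 2 * b := by positivity
  have hscale := integral_comp_mul_left_Ioi
    (fun t => t ^ n / n ! * exp (-(t + b) ^ 2)) 0 (inv_pos.2 hc)
  rw [mul_zero, inv_inv, smul_eq_mul, eq_comm, ← eq_inv_mul_iff_mul_eq₀ hc.ne'] at hscale
  rw [Ifun_neg_succ_eq_integral, hscale, ← integral_const_mul, ← integral_const_mul]
  refine setIntegral_congr_fun measurableSet_Ioi fun s _ => ?_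
  have hexp : exp (b ^ 2) * exp (-((2 * b)⁻¹ * s + b) ^ 2)
      = exp (-s) * exp (-((4 * b ^ 2)⁻¹ * s ^ 2)) := by
    rw [← exp_add, ← exp_add]
    congr 1
    field_simp
    ring
  simp only [smul_eq_mul]
  calc (2 * b) ^ (n + 1) * exp (b ^ 2) * ((2 * b)⁻¹ * (((2 * b)⁻¹ * s) ^ n / n !
          * exp (-((2 * b)⁻¹ * s + b) ^ 2)))
      = (exp (b ^ 2) * exp (-((2 * b)⁻¹ * s + b) ^ 2)) * (s ^ n / n !) := by
        rw [mul_pow _ s, inv_pow, pow_succ]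
        field_simp
    _ = _ := by rw [hexp]; ring

/-- `(2b)^m e^{b²} I_m(-b) → 1` as `b → ∞`, i.e.
`e^{α²} I_m(α) ∼ (-2α)^{-m}` as `α → -∞`. -/
theorem I_asymptotics_at_bot (m : ℕ) (hm : 1 ≤ m) :
    Tendsto (fun b : ℝ => (2 * b) ^ m * Real.exp (b ^ 2) * Ifun (-b) m) atTop (𝓝 1) := by
  obtain ⟨n, rfl⟩ := Nat.exists_eq_add_of_le' hm
  have hdamp : Tendsto (fun b : ℝ => (4 * b ^ 2)⁻¹) atTop (𝓝[≥] 0) :=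
    tendsto_nhdsWithin_mono_right Ioi_subset_Ici_self <| tendsto_inv_atTop_nhdsGT_zero.comp <|
      (tendsto_pow_atTop two_ne_zero).const_mul_atTop four_pos
  have hlim := (tendsto_integral_exp_neg_mul_sq_smul
    ((integrableOn_pow_mul_exp_neg_Ioi n).div_const (n ! : ℝ))).comp hdamp
  rw [integral_div, integral_pow_mul_exp_neg_Ioi, div_self (by positivity)] at hlim
  refine hlim.congr' ?_
  filter_upwards [eventually_gt_atTop 0] with b hb
  exact (Ifun_neg_succ_eq_integral_damped n hb).symm

end StrongInteraction
end

section
/- For every integer m ≥ 2, the function α ↦ J_m(α) is nonincreasing on (0,∞); that is, for all 0 < A ≤ α, J_m(α) ≤ J_m(A). -/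
/-!
Formalization of statements from "The strong interaction limit of
continuous-time weakly self-avoiding walk" by Brydges, Dahlqvist, Slade.

An `n`-step nearest-neighbour walk on `ℤ^d` starting at the origin is encoded
bijectively by its sequence of steps `s : Fin n → Fin d × Bool`, a step being a
coordinate direction together with a sign.
-/

open scoped BigOperators Topology
open Filter

namespace StrongInteraction

/-- `J_m(α) = ∫_{-α}^∞ ((1+u/α)^{m-1}/(m-1)!) e^{-u²} du`. -/
noncomputable def Jfun (α : ℝ) (m : ℕ) : ℝ :=
  ∫ u in Set.Ioi (-α), ((1 + u / α) ^ (m - 1) / (Nat.factorial (m - 1))) * Real.exp (-u ^ 2)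

/-!
With `t = 1/α`, `(m-1)! J_m(α) = G(t) := ∫ max(1 + t u, 0)^{m-1} e^{-u²} du`. As an integral of
convex functions of `t`, `G` is convex; and since `∫ u e^{-u²} du = 0`, integrating the Bernoulli
inequality `1 + (m-1) t u ≤ max(1 + t u, 0)^{m-1}` gives `G(0) ≤ G(t)`. A convex function minimal
at `0` is nondecreasing on `[0, ∞)`, and `1/α` decreases with `α`.
-/

open MeasureTheory Real Set

lemma convexOn_max_zero_pow (n : ℕ) : ConvexOn ℝ univ fun x : ℝ => max x 0 ^ n :=
  (convexOn_id convex_univ).sup (convexOn_const 0 convex_univ) |>.pow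
    (fun x _ => le_max_right x 0) n

lemma one_add_mul_le_max_zero_pow (n : ℕ) (a : ℝ) : 1 + n * a ≤ max (1 + a) 0 ^ n :=
  calc 1 + n * a ≤ 1 + n * max a (-1) := by gcongr; exact le_max_left a (-1)
    _ ≤ (1 + max a (-1)) ^ n := one_add_mul_le_pow (by linarith [le_max_right a (-1)]) n
    _ = max (1 + a) 0 ^ n := by rw [← max_add_add_left]; norm_num

lemma convexOn_integral {E α : Type*} [AddCommGroup E] [Module ℝ E] [MeasurableSpace α]
    {μ : Measure α} {s : Set E} {f : E → α → ℝ} (hs : Convex ℝ s)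
    (hf : ∀ a, ConvexOn ℝ s (f · a)) (hint : ∀ x ∈ s, Integrable (f x) μ) :
    ConvexOn ℝ s fun x => ∫ a, f x a ∂μ := by
  refine ⟨hs, fun x hx y hy a b ha hb hab => ?_⟩
  calc ∫ z, f (a • x + b • y) z ∂μ ≤ ∫ z, (a * f x z + b * f y z) ∂μ :=
        integral_mono (hint _ (hs hx hy ha hb hab))
          (((hint x hx).const_mul a).add ((hint y hy).const_mul b))
          fun z => (hf z).2 hx hy ha hb hab
    _ = a • ∫ z, f x z ∂μ + b • ∫ z, f y z ∂μ := by
        rw [integral_add ((hint x hx).const_mul a) ((hint y hy).const_mul b),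
          integral_const_mul, integral_const_mul, smul_eq_mul, smul_eq_mul]

lemma integrable_pow_mul_exp_neg_sq (k : ℕ) : Integrable fun u : ℝ => u ^ k * exp (-u ^ 2) := by
  simpa using integrable_rpow_mul_exp_neg_mul_sq one_pos
    (neg_one_lt_zero.trans_le (Nat.cast_nonneg k))

lemma integral_mul_exp_neg_sq : ∫ u : ℝ, u * exp (-u ^ 2) = 0 := by
  have h := integral_neg_eq_self (fun u : ℝ => u * exp (-u ^ 2)) volume
  simp only [neg_sq, neg_mul, integral_neg] at h
  linarith

noncomputable def gaussPosPow (n : ℕ) (t : ℝ) : ℝ :=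
  ∫ u, max (1 + t * u) 0 ^ n * exp (-u ^ 2)

lemma integrable_max_zero_pow_mul_exp_neg_sq (n : ℕ) (t : ℝ) :
    Integrable fun u : ℝ => max (1 + t * u) 0 ^ n * exp (-u ^ 2) := by
  have hdom : Integrable fun u : ℝ =>
      2 ^ (n - 1) * (exp (-u ^ 2) + |t| ^ n * ‖u ^ n * exp (-u ^ 2)‖) :=
    (((integrable_pow_mul_exp_neg_sq 0).congr (by simp)).add
      ((integrable_pow_mul_exp_neg_sq n).norm.const_mul _)).const_mul _
  refine hdom.mono' (by fun_prop) (Eventually.of_forall fun u => ?_)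
  have hbase : max (1 + t * u) 0 ≤ 1 + |t * u| :=
    max_le (by linarith [le_abs_self (t * u)]) (by positivity)
  calc ‖max (1 + t * u) 0 ^ n * exp (-u ^ 2)‖ = max (1 + t * u) 0 ^ n * exp (-u ^ 2) := by
        rw [Real.norm_of_nonneg (by positivity)]
    _ ≤ (1 + |t * u|) ^ n * exp (-u ^ 2) := by gcongr
    _ ≤ 2 ^ (n - 1) * (1 ^ n + |t * u| ^ n) * exp (-u ^ 2) := by
        gcongr; exact add_pow_le zero_le_one (abs_nonneg _) n
    _ = 2 ^ (n - 1) * (exp (-u ^ 2) + |t| ^ n * ‖u ^ n * exp (-u ^ 2)‖) := by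
        rw [norm_mul, Real.norm_of_nonneg (exp_pos _).le, norm_pow, Real.norm_eq_abs, abs_mul,
          mul_pow]
        ring

lemma convexOn_gaussPosPow (n : ℕ) : ConvexOn ℝ univ (gaussPosPow n) := by
  refine convexOn_integral convex_univ (fun u => ?_)
    fun t _ => integrable_max_zero_pow_mul_exp_neg_sq n t
  have hline : ConvexOn ℝ univ fun t : ℝ => max (1 + t * u) 0 ^ n := by
    simpa [Function.comp_def, AffineMap.lineMap_apply, mul_comm, add_comm] using
      (convexOn_max_zero_pow n).comp_affineMap (AffineMap.lineMap (1 : ℝ) (1 + u))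
  simpa only [smul_eq_mul, mul_comm] using hline.smul (exp_pos (-u ^ 2)).le

lemma gaussPosPow_zero_le (n : ℕ) (t : ℝ) : gaussPosPow n 0 ≤ gaussPosPow n t := by
  have hexp : Integrable fun u : ℝ => exp (-u ^ 2) :=
    (integrable_pow_mul_exp_neg_sq 0).congr (by simp)
  have hlin : Integrable fun u : ℝ => (n * t) * (u * exp (-u ^ 2)) :=
    ((integrable_pow_mul_exp_neg_sq 1).congr (by simp)).const_mul _
  calc gaussPosPow n 0 = ∫ u : ℝ, (exp (-u ^ 2) + (n * t) * (u * exp (-u ^ 2))) := by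
        rw [integral_add hexp hlin, integral_const_mul, integral_mul_exp_neg_sq]
        simp [gaussPosPow]
    _ ≤ gaussPosPow n t := by
        refine integral_mono (hexp.add hlin) (integrable_max_zero_pow_mul_exp_neg_sq n t)
          fun u => ?_
        linarith [mul_le_mul_of_nonneg_right (one_add_mul_le_max_zero_pow n (t * u))
          (exp_pos (-u ^ 2)).le]

lemma monotoneOn_gaussPosPow (n : ℕ) : MonotoneOn (gaussPosPow n) (Ici 0) := by
  intro s hs t _ hst
  rcases (mem_Ici.1 hs).eq_or_lt with rfl | hs
  · exact gaussPosPow_zero_le n t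
  · exact (convexOn_gaussPosPow n).le_right_of_left_le'' (mem_univ 0) (mem_univ t) hs hst
      (gaussPosPow_zero_le n s)

lemma Jfun_eq_gaussPosPow_div {c : ℝ} (hc : 0 < c) {m : ℕ} (hm : 2 ≤ m) :
    Jfun c m = gaussPosPow (m - 1) c⁻¹ / (m - 1).factorial := by
  have hfactor (u : ℝ) : 1 + c⁻¹ * u = c⁻¹ * (u - -c) := by field_simp; ring
  rw [gaussPosPow, ← integral_div, ← setIntegral_eq_integral_of_forall_compl_eq_zero]
  · refine setIntegral_congr_fun measurableSet_Ioi fun u hu => ?_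
    have hpos : 0 ≤ 1 + c⁻¹ * u := by
      rw [hfactor]; exact mul_nonneg (inv_nonneg.2 hc.le) (sub_nonneg.2 (le_of_lt hu))
    rw [max_eq_left hpos, div_eq_inv_mul u c]
    ring
  · intro u hu
    have hneg : 1 + c⁻¹ * u ≤ 0 := by
      rw [hfactor]; exact mul_nonpos_of_nonneg_of_nonpos (inv_nonneg.2 hc.le)
        (sub_nonpos.2 (not_lt.1 hu))
    rw [max_eq_right hneg, zero_pow (by omega), zero_mul, zero_div]

/-- for `m ≥ 2`, `α ↦ J_m(α)` is nonincreasing on `(0,∞)`. -/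
theorem J_antitone (m : ℕ) (hm : 2 ≤ m) (A α : ℝ) (hA : 0 < A) (hAα : A ≤ α) :
    Jfun α m ≤ Jfun A m := by
  have hα : 0 < α := hA.trans_le hAα
  rw [Jfun_eq_gaussPosPow_div hα hm, Jfun_eq_gaussPosPow_div hA hm]
  gcongr
  exact monotoneOn_gaussPosPow _ (inv_nonneg.2 hα.le) (inv_nonneg.2 hA.le) (inv_anti₀ hA hAα)

end StrongInteraction
end

section
/- Fix integers d ≥ 1 and n ≥ 0 and a walk Y ∈ W_n. Then lim_{α→∞} (α e^{−α²})^{n+1−|Y|} ∏_{v∈range(Y)} J_{n_v(Y)}(α) = 1_{Y ∈ S_n} · π^{(n+1)/2}, where |Y| = #range(Y) is the number of distinct vertices visited by Y. -/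
/-!
Formalization of statements from "The strong interaction limit of
continuous-time weakly self-avoiding walk" by Brydges, Dahlqvist, Slade.

An `n`-step nearest-neighbour walk on `ℤ^d` starting at the origin is encoded
bijectively by its sequence of steps `s : Fin n → Fin d × Bool`, a step being a
coordinate direction together with a sign.
-/

open scoped BigOperators Topology
open Filter

namespace StrongInteraction

/-!
Each factor `J_m(α)` tends to `√π / (m-1)!` by dominated convergence, since
`(1 + u/α)^(m-1) e^{-u²} ≤ e^{(m-1)²/2} e^{-u²/2}` for `α ≥ 1`. A self-avoiding walk has
`n + 1` distinct vertices, each visited once, so the prefactor is `1` and the product tends to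
`(√π)^(n+1)`. Otherwise `|Y| < n + 1`, and the prefactor `(α e^{-α²})^{n+1-|Y|}` tends to `0`
while the product converges.
-/

open Real MeasureTheory Set

lemma one_add_div_pos {α u : ℝ} (hα : 0 < α) (hu : -α < u) : 0 < 1 + u / α := by
  rw [one_add_div hα.ne']
  exact div_pos (by linarith) hα

lemma one_add_div_pow_mul_exp_neg_sq_le (k : ℕ) {α u : ℝ} (hα : 1 ≤ α) (hu : -α < u) :
    (1 + u / α) ^ k * exp (-u ^ 2) ≤ exp ((k : ℝ) ^ 2 / 2) * exp (-(1 / 2) * u ^ 2) := by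
  have hα₀ : 0 < α := by linarith
  have hpos := one_add_div_pos hα₀ hu
  have hle : 1 + u / α ≤ exp |u| := by
    have : u / α ≤ |u| :=
      (div_le_div_of_nonneg_right (le_abs_self u) hα₀.le).trans (div_le_self (abs_nonneg u) hα)
    linarith [add_one_le_exp |u|]
  calc (1 + u / α) ^ k * exp (-u ^ 2)
      ≤ exp |u| ^ k * exp (-u ^ 2) := by gcongr
    _ = exp (k * |u| - u ^ 2) := by rw [← exp_nat_mul, ← exp_add, sub_eq_add_neg]
    _ ≤ exp ((k : ℝ) ^ 2 / 2 + -(1 / 2) * u ^ 2) :=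
        exp_le_exp.mpr (by nlinarith [sq_nonneg ((k : ℝ) - |u|), sq_abs u])
    _ = exp ((k : ℝ) ^ 2 / 2) * exp (-(1 / 2) * u ^ 2) := exp_add _ _

theorem tendsto_setIntegral_Ioi_one_add_div_pow_mul_exp_neg_sq (k : ℕ) :
    Tendsto (fun α : ℝ => ∫ u in Ioi (-α), (1 + u / α) ^ k * exp (-u ^ 2)) atTop (𝓝 √π) := by
  have hgauss : ∫ u : ℝ, exp (-u ^ 2) = √π := by simpa using integral_gaussian 1
  rw [← hgauss]
  simp_rw [← integral_indicator measurableSet_Ioi]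
  refine tendsto_integral_filter_of_dominated_convergence
    (fun u => exp ((k : ℝ) ^ 2 / 2) * exp (-(1 / 2) * u ^ 2)) ?_ ?_ ?_ ?_
  · exact Eventually.of_forall fun α =>
      (Continuous.aestronglyMeasurable (by fun_prop)).indicator measurableSet_Ioi
  · filter_upwards [eventually_ge_atTop 1] with α hα
    refine ae_of_all _ fun u => ?_
    by_cases hu : u ∈ Ioi (-α)
    · rw [indicator_of_mem hu, norm_of_nonneg]
      · exact one_add_div_pow_mul_exp_neg_sq_le k hα hu
      · have := one_add_div_pos (by linarith) hu
        positivity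
    · rw [indicator_of_notMem hu, norm_zero]
      positivity
  · exact (integrable_exp_neg_mul_sq (by norm_num)).const_mul _
  · refine ae_of_all _ fun u => ?_
    have hlim : Tendsto (fun α : ℝ => (1 + u / α) ^ k * exp (-u ^ 2)) atTop
        (𝓝 (exp (-u ^ 2))) := by
      simpa using ((tendsto_const_nhds.div_atTop tendsto_id).const_add 1).pow k |>.mul_const
        (exp (-u ^ 2))
    refine hlim.congr' ?_
    filter_upwards [eventually_gt_atTop (-u)] with α hα
    exact (indicator_of_mem (show u ∈ Ioi (-α) from neg_lt.mp hα)
      (fun u : ℝ => (1 + u / α) ^ k * exp (-u ^ 2))).symm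

theorem tendsto_Jfun (m : ℕ) :
    Tendsto (fun α : ℝ => Jfun α m) atTop (𝓝 (√π / (m - 1).factorial)) := by
  simp_rw [Jfun, div_mul_eq_mul_div, integral_div]
  exact (tendsto_setIntegral_Ioi_one_add_div_pow_mul_exp_neg_sq (m - 1)).div_const _

lemma tendsto_mul_exp_neg_sq_atTop_nhds_zero :
    Tendsto (fun α : ℝ => α * exp (-α ^ 2)) atTop (𝓝 0) := by
  refine squeeze_zero' ?_ ?_ (by simpa using tendsto_pow_mul_exp_neg_atTop_nhds_zero 1)
  · filter_upwards [eventually_ge_atTop 0] with α hα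
    positivity
  · filter_upwards [eventually_ge_atTop 1] with α hα
    gcongr
    nlinarith

section Walks

variable {d n : ℕ} {s : Fin n → Fin d × Bool}

lemma card_walkRange_le : (walkRange s).card ≤ n + 1 := by
  simpa [walkRange] using Finset.card_image_le (s := Finset.univ) (f := walkPos s)

lemma selfAvoiding_iff_card_walkRange : SelfAvoiding s ↔ (walkRange s).card = n + 1 := by
  rw [SelfAvoiding, ← injOn_univ, ← Finset.coe_univ, ← Finset.card_image_iff, Finset.card_univ,
    Fintype.card_fin, walkRange]

lemma visits_eq_one_of_selfAvoiding (hs : SelfAvoiding s) {v : Fin d → ℤ}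
    (hv : v ∈ walkRange s) : visits s v = 1 := by
  obtain ⟨k, -, rfl⟩ := Finset.mem_image.mp hv
  rw [visits, Finset.card_eq_one]
  exact ⟨k, by ext j; simp [hs.eq_iff]⟩

end Walks

theorem J_product_limit_general (d n : ℕ) (s : Fin n → Fin d × Bool) :
    Tendsto (fun α : ℝ => (α * Real.exp (-α ^ 2)) ^ (n + 1 - (walkRange s).card) *
        ∏ v ∈ walkRange s, Jfun α (visits s v)) atTop
      (𝓝 (if SelfAvoiding s then Real.pi ^ (((n : ℝ) + 1) / 2) else 0)) := by
  split_ifs with hs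
  · have hcard := selfAvoiding_iff_card_walkRange.mp hs
    have hsqrt : √π ^ (n + 1) = π ^ (((n : ℝ) + 1) / 2) := by
      rw [sqrt_eq_rpow, ← rpow_natCast, ← rpow_mul pi_nonneg]
      push_cast
      ring_nf
    have hJ : Tendsto (fun α => Jfun α 1 ^ (n + 1)) atTop (𝓝 (√π ^ (n + 1))) := by
      simpa using (tendsto_Jfun 1).pow (n + 1)
    rw [← hsqrt]
    refine hJ.congr fun α => ?_
    rw [hcard, Nat.sub_self, pow_zero, one_mul,
      Finset.prod_congr rfl fun v hv => by rw [visits_eq_one_of_selfAvoiding hs hv],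
      Finset.prod_const, hcard]
  · have hexp : n + 1 - (walkRange s).card ≠ 0 :=
      Nat.sub_ne_zero_of_lt <| card_walkRange_le.lt_of_ne
        (mt selfAvoiding_iff_card_walkRange.mpr hs)
    have hprod := tendsto_finsetProd (walkRange s) fun v _ => tendsto_Jfun (visits s v)
    have hprefactor := tendsto_mul_exp_neg_sq_atTop_nhds_zero.pow (n + 1 - (walkRange s).card)
    simpa [zero_pow hexp] using hprefactor.mul hprod

/-- `(α e^{-α²})^{n+1-|Y|} ∏_{v∈range(Y)} J_{n_v}(α) → 1_{Y∈S_n} π^{(n+1)/2}`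
as `α → ∞`, where `|Y|` is the number of distinct vertices visited by `Y`. -/
theorem J_product_limit (d n : ℕ) (hd : 1 ≤ d) (s : Fin n → Fin d × Bool) :
    Tendsto (fun α : ℝ => (α * Real.exp (-α ^ 2)) ^ (n + 1 - (walkRange s).card) *
        ∏ v ∈ walkRange s, Jfun α (visits s v)) atTop
      (𝓝 (if SelfAvoiding s then Real.pi ^ (((n : ℝ) + 1) / 2) else 0)) :=
  J_product_limit_general d n s

end StrongInteraction
end

section
/- Fix an integer d ≥ 1, δ ∈ (0,1), and p > 0, and suppose ρ = ρ(g) is chosen so that α(g,ρ(g)) = (ρ(g)−1)/(2√g) → +∞ and g^{−1/2} e^{α(g,ρ(g))²} → p as g → ∞. Let z = (2d)^{−1}(1−δ) p √π. Then for every integer n ≥ 0 and every x ∈ ℤ^d, lim_{g→∞} w_n(g,ρ(g); x) = p √π · c_n(x) · z^n. -/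
/-!
Formalization of statements from "The strong interaction limit of
continuous-time weakly self-avoiding walk" by Brydges, Dahlqvist, Slade.

An `n`-step nearest-neighbour walk on `ℤ^d` starting at the origin is encoded
bijectively by its sequence of steps `s : Fin n → Fin d × Bool`, a step being a
coordinate direction together with a sign.
-/

open scoped BigOperators Topology
open Filter

namespace StrongInteraction

/-- `c_n(x)`: the number of `n`-step self-avoiding walks ending at `x`. -/
def csawAt (d n : ℕ) (x : Fin d → ℤ) : ℕ :=
  (Finset.univ.filter fun s : Fin n → Fin d × Bool =>
    SelfAvoiding s ∧ walkPos s (Fin.last n) = x).card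

/-- `w_n(g,ρ;x)`: the continuous-time weakly self-avoiding walk weight of
`n`-step walks ending at `x`, for killing rate `δ`, expressed via the
Gamma-integral formula for the expectation over the exponential holding times. -/
noncomputable def wAt (d : ℕ) (δ : ℝ) (n : ℕ) (g ρ : ℝ) (x : Fin d → ℤ) : ℝ :=
  ((1 - δ) / (2 * d)) ^ n *
    ∑ s ∈ Finset.univ.filter (fun s : Fin n → Fin d × Bool => walkPos s (Fin.last n) = x),
      ∏ v ∈ walkRange s, F g ρ (visits s v)

/-!
Completing the square and substituting `t = (v + α) / √g`, with `α = (ρ - 1) / (2√g)`, gives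
`F_{g,ρ}(m) = e^{α²} g^{-1/2} / (m-1)! · ∫_{-α}^∞ ((v + α) / √g)^{m-1} e^{-v²} dv`.
The hypotheses force `α → ∞` and `α² ~ (log g) / 2`, so `α / √g → 0`; by dominated convergence
`F_{g,ρ(g)}(1) → p√π` while `F_{g,ρ(g)}(m) → 0` for `m ≥ 2`. In the limit only walks visiting
each vertex once, i.e. self-avoiding walks, survive, each with weight `(p√π)^{n+1}`.
-/

open MeasureTheory Real Set
open scoped Nat

lemma setIntegral_Ioi_comp_sub_right {E : Type*} [NormedAddCommGroup E] [NormedSpace ℝ E]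
    (f : ℝ → E) (a c : ℝ) : ∫ x in Ioi a, f (x - c) = ∫ x in Ioi (a - c), f x := by
  have := (measurePreserving_sub_right volume c).setIntegral_preimage_emb
    (measurableEmbedding_subRight c) f (Ioi (a - c))
  simpa using this

lemma norm_pow_mul_exp_neg_sq_le {x y : ℝ} (k : ℕ) (hy : |y| ≤ |x| + 1) :
    ‖y ^ k * exp (-x ^ 2)‖ ≤ (k ! : ℝ) * exp (3 / 2) * exp (-(1 / 2) * x ^ 2) := by
  have hpow : |y| ^ k ≤ (k ! : ℝ) * exp (|x| + 1) := by
    have := pow_div_factorial_le_exp (x := |x| + 1) (by positivity) k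
    rw [div_le_iff₀ (by positivity)] at this
    calc |y| ^ k ≤ (|x| + 1) ^ k := by gcongr
      _ ≤ (k ! : ℝ) * exp (|x| + 1) := by linarith
  have hquad : |x| + 1 + -x ^ 2 ≤ 3 / 2 + -(1 / 2) * x ^ 2 := by
    nlinarith [sq_abs x, sq_nonneg (|x| - 1)]
  rw [norm_mul, norm_pow, norm_eq_abs, norm_of_nonneg (exp_pos _).le]
  calc |y| ^ k * exp (-x ^ 2) ≤ (k ! : ℝ) * exp (|x| + 1) * exp (-x ^ 2) := by gcongr
    _ ≤ (k ! : ℝ) * exp (3 / 2) * exp (-(1 / 2) * x ^ 2) := by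
      rw [mul_assoc, mul_assoc, ← exp_add, ← exp_add]
      gcongr

lemma tendsto_setIntegral_Ioi_pow_mul_exp_neg_sq {ι : Type*} {l : Filter ι}
    [l.IsCountablyGenerated] {a b : ι → ℝ} (ha : Tendsto a l atTop) (hb : Tendsto b l (𝓝 0))
    (hab : Tendsto (fun i => b i * a i) l (𝓝 0)) (k : ℕ) :
    Tendsto (fun i => ∫ v in Ioi (-a i), (b i * (v + a i)) ^ k * exp (-v ^ 2)) l
      (𝓝 (0 ^ k * √π)) := by
  have hgauss : ∫ v, (0 : ℝ) ^ k * exp (-v ^ 2) = 0 ^ k * √π := by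
    rw [integral_const_mul]
    simpa using congrArg ((0 : ℝ) ^ k * ·) (integral_gaussian 1)
  have hsmall : ∀ᶠ i in l, |b i| ≤ 1 ∧ |b i * a i| ≤ 1 := by
    have h1 := hb.abs.eventually (ge_mem_nhds (by norm_num : |(0 : ℝ)| < 1))
    have h2 := hab.abs.eventually (ge_mem_nhds (by norm_num : |(0 : ℝ)| < 1))
    exact h1.and h2
  simp_rw [← integral_indicator measurableSet_Ioi]
  rw [← hgauss]
  refine tendsto_integral_filter_of_dominated_convergence
    (fun v => (k ! : ℝ) * exp (3 / 2) * exp (-(1 / 2) * v ^ 2)) ?_ ?_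
    ((integrable_exp_neg_mul_sq (by norm_num)).const_mul _) ?_
  · exact Eventually.of_forall fun i =>
      (Continuous.aestronglyMeasurable (by fun_prop)).indicator measurableSet_Ioi
  · filter_upwards [hsmall] with i ⟨hbi, habi⟩
    refine Eventually.of_forall fun v => (norm_indicator_le_norm_self _ _).trans ?_
    refine norm_pow_mul_exp_neg_sq_le k ?_
    calc |b i * (v + a i)| = |b i * v + b i * a i| := by rw [mul_add]
      _ ≤ |b i| * |v| + |b i * a i| := by rw [← abs_mul]; exact abs_add_le _ _
      _ ≤ |v| + 1 := by nlinarith [abs_nonneg v]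
  · refine Eventually.of_forall fun v => ?_
    have hlim : Tendsto (fun i => (b i * v + b i * a i) ^ k * exp (-v ^ 2)) l
        (𝓝 ((0 * v + 0) ^ k * exp (-v ^ 2))) :=
      (((hb.mul_const v).add hab).pow k).mul_const _
    rw [zero_mul, zero_add] at hlim
    refine hlim.congr' ?_
    filter_upwards [ha.eventually_gt_atTop (-v)] with i hi
    rw [indicator_of_mem (by simp only [mem_Ioi]; linarith), mul_add]

lemma tendsto_div_sqrt_of_tendsto_exp_sq_mul_inv_sqrt {α : ℝ → ℝ} {p : ℝ} (hp : 0 < p)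
    (h : Tendsto (fun g => exp (α g ^ 2) * (√g)⁻¹) atTop (𝓝 p)) :
    Tendsto (fun g => α g / √g) atTop (𝓝 0) := by
  have hlog : Tendsto (fun g => α g ^ 2 - log g / 2) atTop (𝓝 (log p)) := by
    refine ((continuousAt_log hp.ne').tendsto.comp h).congr' ?_
    filter_upwards [eventually_gt_atTop 0] with g hg
    rw [Function.comp_apply, log_mul (exp_pos _).ne' (inv_pos.2 (sqrt_pos.2 hg)).ne', log_exp,
      log_inv, log_sqrt hg.le, sub_eq_add_neg]
  have hsq : Tendsto (fun g => (α g / √g) ^ 2) atTop (𝓝 0) := by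
    have := (hlog.div_atTop tendsto_id).add
      (isLittleO_log_id_atTop.tendsto_div_nhds_zero.div_const 2)
    rw [zero_add, zero_div] at this
    refine this.congr' ?_
    filter_upwards [eventually_gt_atTop 0] with g hg
    rw [div_pow, sq_sqrt hg.le, id]
    ring
  rw [tendsto_zero_iff_abs_tendsto_zero]
  have := (continuous_sqrt.tendsto 0).comp hsq
  rw [sqrt_zero] at this
  exact this.congr fun g => sqrt_sq_eq_abs _

lemma F_eq_setIntegral_gaussian {g : ℝ} (hg : 0 < g) (ρ : ℝ) (m : ℕ) :
    F g ρ m = exp (((ρ - 1) / (2 * √g)) ^ 2) * (√g)⁻¹ / (m - 1)! *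
      ∫ v in Ioi (-((ρ - 1) / (2 * √g))),
        ((√g)⁻¹ * (v + (ρ - 1) / (2 * √g))) ^ (m - 1) * exp (-v ^ 2) := by
  set α := (ρ - 1) / (2 * √g) with hα
  set G : ℝ → ℝ := fun v => ((√g)⁻¹ * (v + α)) ^ (m - 1) * exp (-v ^ 2)
  have hsg : 0 < √g := sqrt_pos.2 hg
  have hsq : √g ^ 2 = g := sq_sqrt hg.le
  have h2α : 2 * √g * α = ρ - 1 := by rw [hα]; field_simp
  have hcompl : ∀ t, t ^ (m - 1) / (m - 1)! * exp (-t - g * t ^ 2 + ρ * t) =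
      exp (α ^ 2) / (m - 1)! * G (√g * t - α) := by
    intro t
    have hsquare : -t - g * t ^ 2 + ρ * t = α ^ 2 + -(√g * t - α) ^ 2 := by
      linear_combination t ^ 2 * hsq - t * h2α
    simp only [G, hsquare, exp_add, sub_add_cancel, inv_mul_cancel_left₀ hsg.ne']
    ring
  rw [F, setIntegral_congr_fun measurableSet_Ioi fun t _ => hcompl t, integral_const_mul,
    integral_comp_mul_left_Ioi (fun u => G (u - α)) 0 hsg, setIntegral_Ioi_comp_sub_right,
    mul_zero, zero_sub, smul_eq_mul]
  ring

lemma tendsto_F {ρ : ℝ → ℝ} {p : ℝ} (hp : 0 < p)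
    (hα : Tendsto (fun g => (ρ g - 1) / (2 * √g)) atTop atTop)
    (hlim : Tendsto (fun g => exp (((ρ g - 1) / (2 * √g)) ^ 2) * (√g)⁻¹) atTop (𝓝 p))
    (m : ℕ) :
    Tendsto (fun g => F g (ρ g) m) atTop (𝓝 (p / (m - 1)! * (0 ^ (m - 1) * √π))) := by
  have hb : Tendsto (fun g : ℝ => (√g)⁻¹) atTop (𝓝 0) :=
    tendsto_inv_atTop_zero.comp tendsto_sqrt_atTop
  have hab : Tendsto (fun g => (√g)⁻¹ * ((ρ g - 1) / (2 * √g))) atTop (𝓝 0) := by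
    simpa only [inv_mul_eq_div] using tendsto_div_sqrt_of_tendsto_exp_sq_mul_inv_sqrt hp hlim
  refine ((hlim.div_const _).mul
    (tendsto_setIntegral_Ioi_pow_mul_exp_neg_sq hα hb hab (m - 1))).congr' ?_
  filter_upwards [eventually_gt_atTop 0] with g hg
  rw [F_eq_setIntegral_gaussian hg]

lemma visits_eq_one {d n : ℕ} {s : Fin n → Fin d × Bool} (hs : SelfAvoiding s)
    {v : Fin d → ℤ} (hv : v ∈ walkRange s) : visits s v = 1 := by
  obtain ⟨k, -, rfl⟩ := Finset.mem_image.1 hv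
  rw [visits, Finset.card_eq_one]
  exact ⟨k, Finset.ext fun j => by simp [hs.eq_iff]⟩

lemma card_walkRange {d n : ℕ} {s : Fin n → Fin d × Bool} (hs : SelfAvoiding s) :
    (walkRange s).card = n + 1 := by
  rw [walkRange, Finset.card_image_of_injective _ hs, Finset.card_univ, Fintype.card_fin]

lemma exists_two_le_visits {d n : ℕ} {s : Fin n → Fin d × Bool} (hs : ¬ SelfAvoiding s) :
    ∃ v ∈ walkRange s, 2 ≤ visits s v := by
  obtain ⟨k, l, hkl, hne⟩ := Function.not_injective_iff.1 hs
  refine ⟨walkPos s k, Finset.mem_image_of_mem _ (Finset.mem_univ k), ?_⟩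
  calc 2 = ({k, l} : Finset (Fin (n + 1))).card := (Finset.card_pair hne).symm
    _ ≤ visits s (walkPos s k) := Finset.card_le_card fun j hj => by
      rcases Finset.mem_insert.1 hj with rfl | hj
      · simp
      · simp [Finset.mem_singleton.1 hj, hkl]

lemma prod_walkRange_visits {R : Type*} [CommMonoidWithZero R] {d n : ℕ} (L : ℕ → R)
    (hL : ∀ m, 2 ≤ m → L m = 0) (s : Fin n → Fin d × Bool) :
    ∏ v ∈ walkRange s, L (visits s v) = if SelfAvoiding s then L 1 ^ (n + 1) else 0 := by
  split_ifs with hs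
  · rw [Finset.prod_congr rfl fun v hv => by rw [visits_eq_one hs hv], Finset.prod_const,
      card_walkRange hs]
  · obtain ⟨v, hv, h2⟩ := exists_two_le_visits hs
    exact Finset.prod_eq_zero hv (hL _ h2)

lemma sum_prod_walkRange_visits {R : Type*} [CommSemiring R] {d n : ℕ} (L : ℕ → R)
    (hL : ∀ m, 2 ≤ m → L m = 0) (x : Fin d → ℤ) :
    ∑ s ∈ Finset.univ.filter (fun s : Fin n → Fin d × Bool => walkPos s (Fin.last n) = x),
      ∏ v ∈ walkRange s, L (visits s v) = csawAt d n x * L 1 ^ (n + 1) := by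
  simp_rw [prod_walkRange_visits L hL, ← Finset.sum_filter, Finset.sum_const, Finset.filter_filter,
    nsmul_eq_mul, csawAt, and_comm]

theorem wAt_limit_general (d : ℕ) (δ : ℝ)
    (p : ℝ) (hp : 0 < p) (ρ : ℝ → ℝ)
    (hα : Tendsto (fun g : ℝ => (ρ g - 1) / (2 * Real.sqrt g)) atTop atTop)
    (hlim : Tendsto (fun g : ℝ =>
        g ^ (-(1 : ℝ) / 2) * Real.exp (((ρ g - 1) / (2 * Real.sqrt g)) ^ 2)) atTop (𝓝 p))
    (z : ℝ) (hz : z = (2 * d : ℝ)⁻¹ * (1 - δ) * p * Real.sqrt Real.pi)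
    (n : ℕ) (x : Fin d → ℤ) :
    Tendsto (fun g : ℝ => wAt d δ n g (ρ g) x) atTop
      (𝓝 (p * Real.sqrt Real.pi * (csawAt d n x : ℝ) * z ^ n)) := by
  have hlim' : Tendsto (fun g => exp (((ρ g - 1) / (2 * √g)) ^ 2) * (√g)⁻¹) atTop (𝓝 p) := by
    refine hlim.congr' ?_
    filter_upwards [eventually_gt_atTop 0] with g hg
    rw [mul_comm, sqrt_eq_rpow, ← rpow_neg hg.le, neg_div]
  set L : ℕ → ℝ := fun m => p / (m - 1)! * (0 ^ (m - 1) * √π)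
  have hL : ∀ m, 2 ≤ m → L m = 0 := fun m hm => by
    simp [L, Nat.sub_ne_zero_of_lt hm]
  have hsum := tendsto_finsetSum
    (Finset.univ.filter fun s : Fin n → Fin d × Bool => walkPos s (Fin.last n) = x)
    fun s _ => tendsto_finsetProd (walkRange s) fun v _ => tendsto_F hp hα hlim' (visits s v)
  rw [sum_prod_walkRange_visits L hL] at hsum
  have hvalue : ((1 - δ) / (2 * d)) ^ n * (csawAt d n x * L 1 ^ (n + 1)) =
      p * √π * csawAt d n x * z ^ n := by
    have hz' : z = (1 - δ) / (2 * d) * (p * √π) := by rw [hz]; ring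
    simp only [L, Nat.sub_self, pow_zero, Nat.factorial_zero, Nat.cast_one, div_one, one_mul]
    rw [hz', mul_pow ((1 - δ) / (2 * d)), pow_succ]
    ring
  rw [← hvalue]
  exact hsum.const_mul _

/-- if `α(g,ρ(g)) = (ρ(g)-1)/(2√g) → ∞` and
`g^{-1/2} e^{α(g,ρ(g))²} → p > 0` as `g → ∞`, then with
`z = (2d)⁻¹(1-δ) p √π` one has `w_n(g,ρ(g);x) → p √π c_n(x) zⁿ`. -/
theorem wAt_limit (d : ℕ) (hd : 1 ≤ d) (δ : ℝ) (hδ : δ ∈ Set.Ioo (0 : ℝ) 1)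
    (p : ℝ) (hp : 0 < p) (ρ : ℝ → ℝ)
    (hα : Tendsto (fun g : ℝ => (ρ g - 1) / (2 * Real.sqrt g)) atTop atTop)
    (hlim : Tendsto (fun g : ℝ =>
        g ^ (-(1 : ℝ) / 2) * Real.exp (((ρ g - 1) / (2 * Real.sqrt g)) ^ 2)) atTop (𝓝 p))
    (z : ℝ) (hz : z = (2 * d : ℝ)⁻¹ * (1 - δ) * p * Real.sqrt Real.pi)
    (n : ℕ) (x : Fin d → ℤ) :
    Tendsto (fun g : ℝ => wAt d δ n g (ρ g) x) atTop
      (𝓝 (p * Real.sqrt Real.pi * (csawAt d n x : ℝ) * z ^ n)) :=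
  wAt_limit_general d δ p hp ρ hα hlim z hz n x

end StrongInteraction
end

section
/- For every g > 0, ρ ∈ ℝ, and integers m₁, m₂ ≥ 1, the function F_{g,ρ} is submultiplicative: F_{g,ρ}(m₁ + m₂) ≤ F_{g,ρ}(m₁)·F_{g,ρ}(m₂). -/
/-!
Formalization of statements from "The strong interaction limit of
continuous-time weakly self-avoiding walk" by Brydges, Dahlqvist, Slade.

An `n`-step nearest-neighbour walk on `ℤ^d` starting at the origin is encoded
bijectively by its sequence of steps `s : Fin n → Fin d × Bool`, a step being a
coordinate direction together with a sign.
-/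

open scoped BigOperators Topology
open Filter

namespace StrongInteraction

/-
Write `kₙ = expTerm n` and `w = weight g ρ`. The Beta integral gives the convolution identity
`k_a ∗ k_b = k_{a+b+1}` on `[0, ∞)`, so `F(a+b+2) = ∫∫_{s,t>0} k_a(s) k_b(t) w(s+t)`.
For `s, t ≥ 0` we have `(s+t)² ≥ s² + t²`, while the linear part of the exponent is additive,
so `w(s+t) ≤ w(s) w(t)` and the double integral splits.
Tonelli is applied to lower Lebesgue integrals; `g > 0` is needed only for their finiteness.
-/

open MeasureTheory Set
open scoped Nat ENNReal

noncomputable def expTerm (n : ℕ) (t : ℝ) : ℝ := t ^ n / n !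

lemma expTerm_nonneg (n : ℕ) {t : ℝ} (ht : 0 ≤ t) : 0 ≤ expTerm n t := by
  unfold expTerm; positivity

@[simp]
lemma expTerm_zero (t : ℝ) : expTerm 0 t = 1 := by
  simp [expTerm]

lemma expTerm_succ_zero (n : ℕ) : expTerm (n + 1) 0 = 0 := by
  simp [expTerm]

@[fun_prop]
lemma continuous_expTerm (n : ℕ) : Continuous (expTerm n) := by
  unfold expTerm; fun_prop

lemma hasDerivAt_expTerm_succ (n : ℕ) (x : ℝ) :
    HasDerivAt (expTerm (n + 1)) (expTerm n x) x := by
  refine ((hasDerivAt_pow (n + 1) x).div_const ((n + 1)! : ℝ)).congr_deriv ?_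
  rw [expTerm, Nat.factorial_succ, Nat.add_sub_cancel]
  push_cast
  field_simp

lemma integral_expTerm_mul_expTerm_sub (a b : ℕ) (u : ℝ) :
    ∫ s in (0 : ℝ)..u, expTerm a s * expTerm b (u - s) = expTerm (a + b + 1) u := by
  induction b generalizing a with
  | zero =>
    simp only [expTerm_zero, mul_one, Nat.add_zero]
    rw [intervalIntegral.integral_eq_sub_of_hasDerivAt (fun x _ => hasDerivAt_expTerm_succ a x)
      (by apply Continuous.intervalIntegrable; fun_prop), expTerm_succ_zero, sub_zero]
  | succ b ih =>
    have ibp := intervalIntegral.integral_mul_deriv_eq_deriv_mul (a := 0) (b := u)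
      (u := fun s => expTerm (b + 1) (u - s)) (u' := fun s => -expTerm b (u - s))
      (fun x _ => by
        simpa [Function.comp_def] using
          (hasDerivAt_expTerm_succ b (u - x)).comp x ((hasDerivAt_id x).const_sub u))
      (fun x _ => hasDerivAt_expTerm_succ a x)
      (by apply Continuous.intervalIntegrable; fun_prop)
      (by apply Continuous.intervalIntegrable; fun_prop)
    simp only [sub_self, expTerm_succ_zero, sub_zero, zero_mul, mul_zero, neg_mul,
      intervalIntegral.integral_neg, sub_neg_eq_add, zero_add] at ibp
    simp_rw [mul_comm (expTerm a _)]
    rw [ibp]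
    simp_rw [mul_comm (expTerm b _)]
    rw [ih (a + 1), show a + 1 + b + 1 = a + (b + 1) + 1 by omega]

lemma setLIntegral_Ioi_zero_eq_setLIntegral_Ioi_sub (f : ℝ → ℝ≥0∞) (s : ℝ) :
    ∫⁻ t in Ioi 0, f t = ∫⁻ u in Ioi s, f (u - s) := by
  rw [← (measurePreserving_sub_right volume s).setLIntegral_comp_preimage_emb
    (measurableEmbedding_subRight s), preimage_sub_const_Ioi, zero_add]

lemma lintegral_Ioi_Ioi_eq_lintegral_Ioi_Ioo {f : ℝ → ℝ → ℝ≥0∞}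
    (hf : Measurable (Function.uncurry f)) :
    ∫⁻ s in Ioi 0, ∫⁻ u in Ioi s, f s u = ∫⁻ u in Ioi 0, ∫⁻ s in Ioo 0 u, f s u := by
  set k : ℝ → ℝ → ℝ≥0∞ := fun s u => if s < u then f s u else 0
  have hk : Measurable (Function.uncurry k) :=
    Measurable.ite (measurableSet_lt measurable_fst measurable_snd) hf measurable_const
  have inner_s : ∀ s ∈ Ioi (0 : ℝ), ∫⁻ u in Ioi s, f s u = ∫⁻ u in Ioi 0, k s u := by
    intro s hs
    rw [← Measure.restrict_restrict_of_subset (Ioi_subset_Ioi (le_of_lt hs)),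
      ← lintegral_indicator measurableSet_Ioi]
    rfl
  have inner_u : ∀ u, ∫⁻ s in Ioo 0 u, f s u = ∫⁻ s in Ioi 0, k s u := by
    intro u
    rw [← Iio_inter_Ioi, ← Measure.restrict_restrict measurableSet_Iio,
      ← lintegral_indicator measurableSet_Iio]
    rfl
  rw [setLIntegral_congr_fun measurableSet_Ioi inner_s,
    lintegral_lintegral_swap hk.aemeasurable]
  simp_rw [inner_u]

lemma lintegral_Ioi_Ioi_eq_lintegral_Ioi_Ioo_sub {f : ℝ → ℝ → ℝ≥0∞}
    (hf : Measurable (Function.uncurry f)) :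
    ∫⁻ s in Ioi 0, ∫⁻ t in Ioi 0, f s t
      = ∫⁻ u in Ioi 0, ∫⁻ s in Ioo 0 u, f s (u - s) := by
  rw [lintegral_congr fun s => setLIntegral_Ioi_zero_eq_setLIntegral_Ioi_sub (f s) s]
  exact lintegral_Ioi_Ioi_eq_lintegral_Ioi_Ioo
    (hf.comp (measurable_fst.prodMk (measurable_snd.sub measurable_fst)))

lemma lintegral_Ioo_expTerm_mul_expTerm_sub (a b : ℕ) {u : ℝ} (hu : 0 ≤ u) :
    ∫⁻ s in Ioo 0 u, ENNReal.ofReal (expTerm a s * expTerm b (u - s))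
      = ENNReal.ofReal (expTerm (a + b + 1) u) := by
  have hint : IntegrableOn (fun s => expTerm a s * expTerm b (u - s)) (Ioo 0 u) :=
    (Continuous.integrableOn_Icc (by fun_prop)).mono_set Ioo_subset_Icc_self
  have hnonneg : 0 ≤ᵐ[volume.restrict (Ioo 0 u)] fun s => expTerm a s * expTerm b (u - s) := by
    filter_upwards [ae_restrict_mem measurableSet_Ioo] with s hs
    exact mul_nonneg (expTerm_nonneg a hs.1.le) (expTerm_nonneg b (sub_nonneg.2 hs.2.le))
  rw [← ofReal_integral_eq_lintegral_ofReal hint hnonneg, ← integral_Ioc_eq_integral_Ioo,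
    ← intervalIntegral.integral_of_le hu, integral_expTerm_mul_expTerm_sub]

noncomputable def weight (g ρ t : ℝ) : ℝ := Real.exp (-t - g * t ^ 2 + ρ * t)

lemma weight_pos (g ρ t : ℝ) : 0 < weight g ρ t := Real.exp_pos _

@[fun_prop]
lemma continuous_weight (g ρ : ℝ) : Continuous (weight g ρ) := by
  unfold weight; fun_prop

lemma weight_add_le {g : ℝ} (ρ : ℝ) (hg : 0 ≤ g) {s t : ℝ} (hs : 0 ≤ s) (ht : 0 ≤ t) :
    weight g ρ (s + t) ≤ weight g ρ s * weight g ρ t := by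
  rw [weight, weight, weight, ← Real.exp_add, Real.exp_le_exp]
  nlinarith [mul_nonneg (mul_nonneg hg hs) ht]

lemma weight_le_exp_mul_gaussian {g : ℝ} (ρ : ℝ) (hg : 0 < g) (t : ℝ) :
    weight g ρ t ≤ Real.exp ((ρ - 1) ^ 2 / (2 * g)) * Real.exp (-(g / 2) * t ^ 2) := by
  rw [weight, ← Real.exp_add, Real.exp_le_exp]
  -- the exponent is `-(g/2) t² - (g/2) (t - (ρ-1)/g)² + (ρ-1)²/(2g)`
  have h : (ρ - 1) ^ 2 / (2 * g) * (2 * g) = (ρ - 1) ^ 2 := div_mul_cancel₀ _ (by positivity)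
  nlinarith [sq_nonneg (g * t - (ρ - 1))]

lemma integrableOn_expTerm_mul_weight {g : ℝ} (ρ : ℝ) (hg : 0 < g) (n : ℕ) :
    IntegrableOn (fun t => expTerm n t * weight g ρ t) (Ioi 0) := by
  have hgauss : IntegrableOn (fun t : ℝ => t ^ n * Real.exp (-(g / 2) * t ^ 2)) (Ioi 0) := by
    simpa [Real.rpow_natCast] using
      integrableOn_rpow_mul_exp_neg_mul_sq (s := n) (half_pos hg)
        (by linarith [n.cast_nonneg (α := ℝ)])
  refine (hgauss.const_mul (Real.exp ((ρ - 1) ^ 2 / (2 * g)) / n !)).mono'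
    (by fun_prop : Continuous _).aestronglyMeasurable ?_
  filter_upwards [ae_restrict_mem measurableSet_Ioi] with t ht
  rw [Real.norm_of_nonneg (mul_nonneg (expTerm_nonneg n (le_of_lt ht)) (weight_pos g ρ t).le)]
  calc expTerm n t * weight g ρ t
      ≤ expTerm n t * (Real.exp ((ρ - 1) ^ 2 / (2 * g)) * Real.exp (-(g / 2) * t ^ 2)) :=
        mul_le_mul_of_nonneg_left (weight_le_exp_mul_gaussian ρ hg t)
          (expTerm_nonneg n (le_of_lt ht))
    _ = _ := by rw [expTerm]; ring

noncomputable def lintegralF (g ρ : ℝ) (n : ℕ) : ℝ≥0∞ :=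
  ∫⁻ t in Ioi 0, ENNReal.ofReal (expTerm n t * weight g ρ t)

lemma lintegralF_add_add_one_le {g : ℝ} (ρ : ℝ) (hg : 0 ≤ g) (a b : ℕ) :
    lintegralF g ρ (a + b + 1) ≤ lintegralF g ρ a * lintegralF g ρ b := by
  calc lintegralF g ρ (a + b + 1)
      = ∫⁻ u in Ioi 0, ∫⁻ s in Ioo 0 u,
          ENNReal.ofReal (expTerm a s * expTerm b (u - s) * weight g ρ u) := by
        refine setLIntegral_congr_fun measurableSet_Ioi fun u hu => ?_
        simp_rw [ENNReal.ofReal_mul' (weight_pos g ρ _).le]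
        rw [lintegral_mul_const' _ _ ENNReal.ofReal_ne_top,
          lintegral_Ioo_expTerm_mul_expTerm_sub a b (le_of_lt hu)]
    _ = ∫⁻ s in Ioi 0, ∫⁻ t in Ioi 0,
          ENNReal.ofReal (expTerm a s * expTerm b t * weight g ρ (s + t)) := by
        rw [lintegral_Ioi_Ioi_eq_lintegral_Ioi_Ioo_sub (by fun_prop)]
        simp only [add_sub_cancel]
    _ ≤ ∫⁻ s in Ioi 0, ∫⁻ t in Ioi 0,
          ENNReal.ofReal (expTerm a s * weight g ρ s) *
            ENNReal.ofReal (expTerm b t * weight g ρ t) := by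
        refine setLIntegral_mono' measurableSet_Ioi fun s hs => ?_
        refine setLIntegral_mono' measurableSet_Ioi fun t ht => ?_
        rw [← ENNReal.ofReal_mul
          (mul_nonneg (expTerm_nonneg a (le_of_lt hs)) (weight_pos g ρ s).le)]
        refine ENNReal.ofReal_le_ofReal ?_
        calc expTerm a s * expTerm b t * weight g ρ (s + t)
            ≤ expTerm a s * expTerm b t * (weight g ρ s * weight g ρ t) :=
              mul_le_mul_of_nonneg_left (weight_add_le ρ hg (le_of_lt hs) (le_of_lt ht))
                (mul_nonneg (expTerm_nonneg a (le_of_lt hs)) (expTerm_nonneg b (le_of_lt ht)))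
          _ = _ := by ring
    _ = lintegralF g ρ a * lintegralF g ρ b :=
        lintegral_lintegral_mul (by fun_prop) (by fun_prop)

lemma F_nonneg (g ρ : ℝ) (m : ℕ) : 0 ≤ F g ρ m :=
  setIntegral_nonneg measurableSet_Ioi fun t ht =>
    mul_nonneg (expTerm_nonneg _ (le_of_lt ht)) (weight_pos g ρ t).le

lemma ofReal_F_add_one {g : ℝ} (ρ : ℝ) (hg : 0 < g) (n : ℕ) :
    ENNReal.ofReal (F g ρ (n + 1)) = lintegralF g ρ n := by
  refine ofReal_integral_eq_lintegral_ofReal (integrableOn_expTerm_mul_weight ρ hg n) ?_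
  filter_upwards [ae_restrict_mem measurableSet_Ioi] with t ht
  exact mul_nonneg (expTerm_nonneg n (le_of_lt ht)) (weight_pos g ρ t).le

/-- submultiplicativity `F_{g,ρ}(m₁+m₂) ≤ F_{g,ρ}(m₁) F_{g,ρ}(m₂)`. -/
theorem F_submultiplicative (g ρ : ℝ) (hg : 0 < g) (m₁ m₂ : ℕ)
    (h₁ : 1 ≤ m₁) (h₂ : 1 ≤ m₂) :
    F g ρ (m₁ + m₂) ≤ F g ρ m₁ * F g ρ m₂ := by
  obtain ⟨a, rfl⟩ := Nat.exists_eq_add_of_le' h₁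
  obtain ⟨b, rfl⟩ := Nat.exists_eq_add_of_le' h₂
  have key := lintegralF_add_add_one_le ρ hg.le a b
  rw [← ofReal_F_add_one ρ hg, ← ofReal_F_add_one ρ hg, ← ofReal_F_add_one ρ hg,
    ← ENNReal.ofReal_mul (F_nonneg g ρ _)] at key
  rw [show a + 1 + (b + 1) = a + b + 1 + 1 by omega]
  exact (ENNReal.ofReal_le_ofReal_iff (mul_nonneg (F_nonneg g ρ _) (F_nonneg g ρ _))).1 key

end StrongInteraction
end

section
/- Let (a_n)_{n≥0} be a sequence of positive real numbers satisfying the approximate subadditivity property a_{n+m} ≤ a_n · a_{m−1} for all integers n ≥ 1 and m ≥ 1. Then limsup_{n→∞} a_n^{1/n} = inf_{n≥1} a_n^{1/(n+1)}; in particular a_n ≥ (limsup_k a_k^{1/k})^{n+1} for all n ≥ 1. -/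
/-!
Formalization of statements from "The strong interaction limit of
continuous-time weakly self-avoiding walk" by Brydges, Dahlqvist, Slade.

An `n`-step nearest-neighbour walk on `ℤ^d` starting at the origin is encoded
bijectively by its sequence of steps `s : Fin n → Fin d × Bool`, a step being a
coordinate direction together with a sign.
-/

open scoped BigOperators Topology
open Filter

namespace StrongInteraction

/-!
Write `c n = a n ^ (1 / (n + 1))`. For fixed `n ≥ 1`, the inequality with `m = j + 1` reads
`a (n + 1 + j) ≤ a n * a j`; iterating it along residue classes mod `n + 1` gives
`a k ≤ M * c n ^ k` with `M` independent of `k`, hence `limsup a k ^ (1 / k) ≤ c n`.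
Conversely every `a k` with `k ≥ 1` is at least `I ^ (k + 1)`, where `I = inf_{n ≥ 1} c n`,
so `a k ^ (1 / k) ≥ I ^ (1 + 1 / k) → I`.
-/

theorem le_pow_mul_of_forall_add_le {a : ℕ → ℝ} {C : ℝ} {p : ℕ} (hC : 0 ≤ C)
    (h : ∀ j, a (p + j) ≤ C * a j) (q r : ℕ) : a (p * q + r) ≤ C ^ q * a r := by
  induction q with
  | zero => simp
  | succ q ih =>
    calc a (p * (q + 1) + r) = a (p + (p * q + r)) := by ring_nf
      _ ≤ C * a (p * q + r) := h _
      _ ≤ C * (C ^ q * a r) := mul_le_mul_of_nonneg_left ih hC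
      _ = C ^ (q + 1) * a r := by ring

theorem exists_le_mul_pow_of_forall_add_le {a : ℕ → ℝ} {C : ℝ} {p : ℕ} (ha : ∀ n, 0 < a n)
    (hp : p ≠ 0) (hC : 0 < C) (h : ∀ j, a (p + j) ≤ C * a j) :
    ∃ M > 0, ∀ k, a k ≤ M * (C ^ (p : ℝ)⁻¹) ^ k := by
  set c := C ^ (p : ℝ)⁻¹
  have hc : 0 < c := Real.rpow_pos_of_pos hC _
  have hcp : c ^ p = C := Real.rpow_inv_natCast_pow hC.le hp
  have hterm : ∀ r, 0 < a r / c ^ r := fun r => by have := ha r; positivity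
  refine ⟨∑ r ∈ Finset.range p, a r / c ^ r,
    Finset.sum_pos (fun r _ => hterm r) ⟨0, Finset.mem_range.2 (Nat.pos_of_ne_zero hp)⟩,
    fun k => ?_⟩
  have hr : a (k % p) / c ^ (k % p) ≤ ∑ r ∈ Finset.range p, a r / c ^ r :=
    Finset.single_le_sum (f := fun r => a r / c ^ r) (fun r _ => (hterm r).le)
      (Finset.mem_range.2 (Nat.mod_lt k (Nat.pos_of_ne_zero hp)))
  calc a k = a (p * (k / p) + k % p) := by rw [Nat.div_add_mod]
    _ ≤ C ^ (k / p) * a (k % p) := le_pow_mul_of_forall_add_le hC.le h _ _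
    _ = a (k % p) / c ^ (k % p) * c ^ k := by
      rw [← hcp, ← pow_mul, ← Nat.div_add_mod k p, pow_add, Nat.div_add_mod]
      field_simp
    _ ≤ _ := mul_le_mul_of_nonneg_right hr (by positivity)

theorem isBoundedUnder_and_limsup_rpow_inv_le_of_le_mul_pow {a : ℕ → ℝ} {M c : ℝ}
    (ha : ∀ n, 0 ≤ a n) (hM : 0 < M) (hc : 0 ≤ c) (h : ∀ k, a k ≤ M * c ^ k) :
    IsBoundedUnder (· ≤ ·) atTop (fun k : ℕ => a k ^ (k : ℝ)⁻¹) ∧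
      limsup (fun k : ℕ => a k ^ (k : ℝ)⁻¹) atTop ≤ c := by
  have hle : ∀ᶠ k : ℕ in atTop, a k ^ (k : ℝ)⁻¹ ≤ M ^ (k : ℝ)⁻¹ * c := by
    filter_upwards [eventually_ne_atTop 0] with k hk
    calc a k ^ (k : ℝ)⁻¹ ≤ (M * c ^ k) ^ (k : ℝ)⁻¹ :=
          Real.rpow_le_rpow (ha k) (h k) (by positivity)
      _ = M ^ (k : ℝ)⁻¹ * c := by
        rw [Real.mul_rpow hM.le (by positivity), Real.pow_rpow_inv_natCast hc hk]
  have hlim : Tendsto (fun k : ℕ => M ^ (k : ℝ)⁻¹ * c) atTop (𝓝 c) := by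
    simpa using (tendsto_const_nhds.rpow (tendsto_inv_atTop_nhds_zero_nat (𝕜 := ℝ))
      (Or.inl hM.ne')).mul_const c
  refine ⟨hlim.isBoundedUnder_le.mono_le hle, ?_⟩
  calc limsup (fun k : ℕ => a k ^ (k : ℝ)⁻¹) atTop
      ≤ limsup (fun k : ℕ => M ^ (k : ℝ)⁻¹ * c) atTop :=
        limsup_le_limsup hle (isCoboundedUnder_le_of_le atTop
          (fun k => Real.rpow_nonneg (ha k) _)) hlim.isBoundedUnder_le
    _ = c := hlim.limsup_eq

theorem le_limsup_rpow_inv_of_pow_succ_le {a : ℕ → ℝ} {c : ℝ} (hc : 0 ≤ c)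
    (h : ∀ k, 1 ≤ k → c ^ (k + 1) ≤ a k)
    (hbdd : IsBoundedUnder (· ≤ ·) atTop (fun k : ℕ => a k ^ (k : ℝ)⁻¹)) :
    c ≤ limsup (fun k : ℕ => a k ^ (k : ℝ)⁻¹) atTop := by
  have hle : ∀ᶠ k : ℕ in atTop, c ^ (1 + (k : ℝ)⁻¹) ≤ a k ^ (k : ℝ)⁻¹ := by
    filter_upwards [eventually_ge_atTop 1] with k hk
    have hk0 : (k : ℝ) ≠ 0 := by positivity
    calc c ^ (1 + (k : ℝ)⁻¹) = (c ^ (k + 1)) ^ (k : ℝ)⁻¹ := by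
          rw [← Real.rpow_natCast, ← Real.rpow_mul hc]
          congr 1
          push_cast
          field_simp
      _ ≤ a k ^ (k : ℝ)⁻¹ := Real.rpow_le_rpow (by positivity) (h k hk) (by positivity)
  have hlim : Tendsto (fun k : ℕ => c ^ (1 + (k : ℝ)⁻¹)) atTop (𝓝 c) := by
    have hexp : Tendsto (fun k : ℕ => 1 + (k : ℝ)⁻¹) atTop (𝓝 1) := by
      simpa using tendsto_const_nhds.add (tendsto_inv_atTop_nhds_zero_nat (𝕜 := ℝ))
    simpa using tendsto_const_nhds.rpow hexp (Or.inr one_pos)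
  calc c = limsup (fun k : ℕ => c ^ (1 + (k : ℝ)⁻¹)) atTop := hlim.limsup_eq.symm
    _ ≤ _ := limsup_le_limsup hle hlim.isBoundedUnder_ge.isCoboundedUnder_le hbdd

theorem le_rpow_inv_natCast_iff {x y : ℝ} {n : ℕ} (hx : 0 ≤ x) (hy : 0 ≤ y) (hn : n ≠ 0) :
    x ≤ y ^ (n : ℝ)⁻¹ ↔ x ^ n ≤ y := by
  rw [Real.le_rpow_inv_iff_of_pos hx hy (by positivity), Real.rpow_natCast]

/-- a variant of Fekete's lemma for a positive sequence with
`a_{n+m} ≤ a_n a_{m-1}`: `limsup_n a_n^{1/n} = inf_{n≥1} a_n^{1/(n+1)}`, and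
`a_n ≥ (limsup_k a_k^{1/k})^{n+1}` for all `n ≥ 1`. -/
theorem fekete_variant (a : ℕ → ℝ) (hpos : ∀ n, 0 < a n)
    (hsub : ∀ n m : ℕ, 1 ≤ n → 1 ≤ m → a (n + m) ≤ a n * a (m - 1)) :
    (limsup (fun n : ℕ => a n ^ ((n : ℝ)⁻¹)) atTop
        = ⨅ n : ℕ, a (n + 1) ^ (((n : ℝ) + 2)⁻¹)) ∧
      ∀ n : ℕ, 1 ≤ n →
        (limsup (fun k : ℕ => a k ^ ((k : ℝ)⁻¹)) atTop) ^ (n + 1) ≤ a n := by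
  set L := limsup (fun k : ℕ => a k ^ (k : ℝ)⁻¹) atTop
  set c : ℕ → ℝ := fun n => a n ^ ((n + 1 : ℕ) : ℝ)⁻¹ with hc
  have hc_nonneg : ∀ n, 0 ≤ c n := fun n => Real.rpow_nonneg (hpos n).le _
  have hupper : ∀ n, 1 ≤ n →
      IsBoundedUnder (· ≤ ·) atTop (fun k : ℕ => a k ^ (k : ℝ)⁻¹) ∧ L ≤ c n := by
    intro n hn
    have hstep : ∀ j, a (n + 1 + j) ≤ a n * a j := fun j => by
      simpa [add_assoc, add_comm 1 j] using hsub n (j + 1) hn le_add_self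
    obtain ⟨M, hM, hle⟩ := exists_le_mul_pow_of_forall_add_le hpos n.succ_ne_zero (hpos n) hstep
    exact isBoundedUnder_and_limsup_rpow_inv_le_of_le_mul_pow (fun k => (hpos k).le) hM
      (hc_nonneg n) hle
  have hbdd := (hupper 1 le_rfl).1
  have hL : 0 ≤ L :=
    le_limsup_rpow_inv_of_pow_succ_le le_rfl (fun k _ => by simpa using (hpos k).le) hbdd
  have hI : (⨅ m : ℕ, a (m + 1) ^ ((m : ℝ) + 2)⁻¹) = ⨅ m, c (m + 1) := by
    simp only [hc]; push_cast; ring_nf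
  have hI_nonneg : 0 ≤ ⨅ m, c (m + 1) := Real.iInf_nonneg fun m => hc_nonneg (m + 1)
  refine ⟨hI ▸ le_antisymm ?_ ?_, fun n hn =>
    (le_rpow_inv_natCast_iff hL (hpos n).le n.succ_ne_zero).1 (hupper n hn).2⟩
  · exact le_ciInf fun m => (hupper (m + 1) le_add_self).2
  · refine le_limsup_rpow_inv_of_pow_succ_le hI_nonneg (fun k hk => ?_) hbdd
    obtain ⟨m, rfl⟩ := Nat.exists_eq_add_of_le' hk
    exact (le_rpow_inv_natCast_iff hI_nonneg (hpos _).le (m + 1).succ_ne_zero).1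
      (ciInf_le ⟨0, by rintro _ ⟨m, rfl⟩; exact hc_nonneg (m + 1)⟩ m)

end StrongInteraction
end
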